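/- arXiv:2411.00721 — 12 statements merged into one kernel-verified Lean document; each statement's English description precedes it below -/
import Mathlib

section
/- Let f : F_2^k → F_2 be a Boolean function, let s ≥ 2 be an integer, and define f_s : F_2^{(k-1)s+1} → F_2 by f_s(x_1, …, x_{(k-1)s+1}) = f(x_1, x_{s+1}, x_{2s+1}, …, x_{(k-1)s+1}). If f is a (k, n)-lifting for all n ≥ k, then f_s is a ((k-1)s+1, n)-lifting for all n ≥ (k-1)s+1. -/
/-- The shift-invariant map `F : F_2^n → F_2^n` induced by a local rule
`f : F_2^k → F_2`, namely `F(x)_i = f(x_i, x_{i+1}, …, x_{i+k-1})`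
with indices taken modulo `n`. -/
def induced (k n : ℕ) (f : (Fin k → ZMod 2) → ZMod 2) :
    (ZMod n → ZMod 2) → ZMod n → ZMod 2 :=
  fun x i => f fun j => x (i + ((j : ℕ) : ZMod n))

/-- The shift-invariant map induced by `f : F_2^k → F_2` with anchor shifted by `j0`
(0-based), namely `F(x)_i = f(x_{i-j0}, x_{i-j0+1}, …, x_{i-j0+k-1})`, indices mod `n`.
For a 1-based special index `j` this is `F(x)_i = f(x_{i-j+1}, …, x_{i-j+k})`
with `j0 = j - 1`. -/
def inducedShift (k n : ℕ) (j0 : ℕ) (f : (Fin k → ZMod 2) → ZMod 2) :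
    (ZMod n → ZMod 2) → ZMod n → ZMod 2 :=
  fun x i => f fun m => x (i - (j0 : ZMod n) + ((m : ℕ) : ZMod n))

/-- A Boolean function `g` depends on the coordinate `i` if there are two inputs
differing only in coordinate `i` on which `g` takes different values. -/
def BoolDependsOn {k : ℕ} (g : (Fin k → ZMod 2) → ZMod 2) (i : Fin k) : Prop :=
  ∃ x y : Fin k → ZMod 2, (∀ j, j ≠ i → x j = y j) ∧ g x ≠ g y

/-- The cyclic right shift on `F_2^n`. -/
def shiftR (n : ℕ) : (ZMod n → ZMod 2) → ZMod n → ZMod 2 :=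
  fun x i => x (i - 1)

/-!
The residues mod `n` split into the cosets `q + ⟨s⟩`, each a cycle `t ↦ q + t • s` of length
`m = addOrderOf (s : ZMod n)`, and `m ≥ k` because `m • s = 0` forces `n ∣ m * s` while
`(k - 1) * s < n`. Along such a cycle the dilated rule `f_s` reads exactly `f` on `ZMod m`,
so the map induced by `f_s` is a product, over the cosets, of copies of the bijective map
induced by `f` on `ZMod m`.
-/

open Function

theorem Function.bijective_of_fiberwise_bijective {ι β α R : Type*} (e : ι × β ≃ α)
    {F : (α → R) → α → R} {G : (β → R) → β → R} (hG : Bijective G)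
    (hFG : ∀ x r t, F x (e (r, t)) = G (fun u => x (e (r, u))) t) : Bijective F := by
  let Ψ : (α → R) ≃ (ι → β → R) :=
    (e.arrowCongr (Equiv.refl R)).symm.trans (Equiv.curry ι β R)
  have hconj : Ψ ∘ F = Pi.map (fun _ => G) ∘ Ψ := by
    funext x r t
    exact hFG x r t
  rw [← Ψ.bijective.of_comp_iff' F, hconj]
  exact (Bijective.piMap fun _ => hG).comp Ψ.bijective

namespace IsOfFinAddOrder

variable {A : Type*} [AddGroup A] {g : A}

theorem val_add_natCast_nsmul (hg : IsOfFinAddOrder g) (t : ZMod (addOrderOf g)) (a : ℕ) :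
    (t + a).val • g = t.val • g + a • g := by
  have : NeZero (addOrderOf g) := ⟨hg.addOrderOf_pos.ne'⟩
  rw [← add_nsmul, ← mod_addOrderOf_nsmul g (t.val + a), ← ZMod.val_natCast,
    Nat.cast_add, ZMod.natCast_val, ZMod.cast_id]

theorem val_nsmul_injective (hg : IsOfFinAddOrder g) :
    Injective fun t : ZMod (addOrderOf g) => t.val • g := by
  have : NeZero (addOrderOf g) := ⟨hg.addOrderOf_pos.ne'⟩
  intro t t' h
  rw [hg.nsmul_inj_mod, Nat.mod_eq_of_lt t.val_lt, Nat.mod_eq_of_lt t'.val_lt] at h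
  exact ZMod.val_injective _ h

theorem exists_val_nsmul_eq (hg : IsOfFinAddOrder g) {h : A} (hh : h ∈ AddSubgroup.zmultiples g) :
    ∃ t : ZMod (addOrderOf g), t.val • g = h := by
  obtain ⟨j, rfl⟩ := hg.mem_multiples_iff_mem_zmultiples.mpr hh
  exact ⟨j, by rw [ZMod.val_natCast, mod_addOrderOf_nsmul]⟩

noncomputable def quotientProdEquiv (hg : IsOfFinAddOrder g) :
    (A ⧸ AddSubgroup.zmultiples g) × ZMod (addOrderOf g) ≃ A :=
  Equiv.ofBijective (fun p => p.1.out + p.2.val • g) <| by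
    constructor
    · rintro ⟨q, t⟩ ⟨q', t'⟩ h
      have hq : q = q' := by
        simpa only [QuotientAddGroup.mk_add_of_mem _ (AddSubgroup.nsmul_mem_zmultiples _ _),
          QuotientAddGroup.out_eq'] using
          congrArg (QuotientAddGroup.mk (s := AddSubgroup.zmultiples g)) h
      subst hq
      exact Prod.ext rfl (hg.val_nsmul_injective (add_left_cancel h))
    · intro a
      have hmem : -(a : A ⧸ AddSubgroup.zmultiples g).out + a ∈ AddSubgroup.zmultiples g :=
        QuotientAddGroup.eq.mp (QuotientAddGroup.out_eq' _)
      obtain ⟨t, ht⟩ := hg.exists_val_nsmul_eq hmem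
      exact ⟨(a, t), by simp only [ht, add_neg_cancel_left]⟩

@[simp]
theorem quotientProdEquiv_apply (hg : IsOfFinAddOrder g) (q : A ⧸ AddSubgroup.zmultiples g)
    (t : ZMod (addOrderOf g)) : hg.quotientProdEquiv (q, t) = q.out + t.val • g :=
  rfl

theorem quotientProdEquiv_add_natCast (hg : IsOfFinAddOrder g) (q : A ⧸ AddSubgroup.zmultiples g)
    (t : ZMod (addOrderOf g)) (a : ℕ) :
    hg.quotientProdEquiv (q, t + a) = hg.quotientProdEquiv (q, t) + a • g := by
  rw [quotientProdEquiv_apply, quotientProdEquiv_apply, hg.val_add_natCast_nsmul, add_assoc]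

end IsOfFinAddOrder

theorem lt_addOrderOf_natCast_of_mul_lt {a s n : ℕ} [NeZero n] (hs : 0 < s) (h : a * s < n) :
    a < addOrderOf (s : ZMod n) := by
  by_contra! hle
  have hpos : 0 < addOrderOf (s : ZMod n) := addOrderOf_pos _
  have hdvd : n ∣ addOrderOf (s : ZMod n) * s := by
    rw [← ZMod.natCast_eq_zero_iff, Nat.cast_mul, ← nsmul_eq_mul, addOrderOf_nsmul_eq_zero]
  have := Nat.le_of_dvd (Nat.mul_pos hpos hs) hdvd
  have := Nat.mul_le_mul_right s hle
  omega

def dilate (k s : ℕ) (f : (Fin k → ZMod 2) → ZMod 2) :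
    (Fin ((k - 1) * s + 1) → ZMod 2) → ZMod 2 :=
  fun y => f fun j =>
    y ⟨(j : ℕ) * s, Nat.lt_succ_of_le (Nat.mul_le_mul_right s (Nat.le_sub_one_of_lt j.isLt))⟩

theorem induced_dilate_quotientProdEquiv {k s n : ℕ} (f : (Fin k → ZMod 2) → ZMod 2)
    (hg : IsOfFinAddOrder (s : ZMod n)) (x : ZMod n → ZMod 2)
    (q : ZMod n ⧸ AddSubgroup.zmultiples (s : ZMod n)) (t : ZMod (addOrderOf (s : ZMod n))) :
    induced ((k - 1) * s + 1) n (dilate k s f) x (hg.quotientProdEquiv (q, t)) =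
      induced k (addOrderOf (s : ZMod n)) f (fun u => x (hg.quotientProdEquiv (q, u))) t := by
  simp only [induced, dilate, hg.quotientProdEquiv_add_natCast, Nat.cast_mul, nsmul_eq_mul]

/-- if `f : F_2^k → F_2` is a `(k,n)`-lifting for all `n ≥ k` and `s ≥ 2`,
then `f_s(x_1, …, x_{(k-1)s+1}) = f(x_1, x_{s+1}, …, x_{(k-1)s+1})`
is a `((k-1)s+1, n)`-lifting for all `n ≥ (k-1)s+1`. -/
theorem stmt0 (k s : ℕ) (hs : 2 ≤ s) (f : (Fin k → ZMod 2) → ZMod 2)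
    (hf : ∀ n, k ≤ n → Function.Bijective (induced k n f)) :
    ∀ n, (k - 1) * s + 1 ≤ n →
      Function.Bijective (induced ((k - 1) * s + 1) n
        (fun y => f fun j => y ⟨(j : ℕ) * s, by
          have hj := j.isLt
          have h2 : (j : ℕ) * s ≤ (k - 1) * s :=
            Nat.mul_le_mul (by omega) (le_refl s)
          omega⟩)) := by
  intro n hn
  have : NeZero n := ⟨by omega⟩
  have hg : IsOfFinAddOrder (s : ZMod n) := isOfFinAddOrder_of_finite _
  have hk : k ≤ addOrderOf (s : ZMod n) := by
    have := lt_addOrderOf_natCast_of_mul_lt (a := k - 1) (s := s) (n := n) (by omega) (by omega)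
    omega
  exact bijective_of_fiberwise_bijective hg.quotientProdEquiv (hf _ hk)
    (induced_dilate_quotientProdEquiv f hg)
end

section
/- Let f : F_2^k → F_2 be a Boolean function of diameter k, and suppose there exists j with 1 ≤ j ≤ k such that the function g(x_1, …, x_k) := f(x_1, …, x_k) ⊕ x_j does not depend on x_j. Suppose furthermore that for each integer t with 1−j ≤ t ≤ k−j such that g depends on x_{j+t}, the product g(x_1, …, x_k) · g(x_{1+t}, …, x_{k+t}) is identically 0 as a function of the variables it involves. Then f is a (k, n)-lifting for each n ≥ k. -/
/-!
Write `g w := f w + w j` and `T x i := x i + g (window of x at i - j)`, so that the map induced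
by `f` is `T` followed by a translation by `j`. The product condition says that whenever `g`
fires on a window, it does not fire on any window shifted by a coordinate `g` reads; hence
toggling the cells at which `g` fires never changes the value of `g` on any window, and `T` is
an involution.
-/

theorem ZMod.eq_zero_of_ne_one {t : ZMod 2} (h : t ≠ 1) : t = 0 := by
  revert t
  decide

section DependsOn

variable {k : ℕ} {g : (Fin k → ZMod 2) → ZMod 2}

theorem BoolDependsOn.apply_eq_of_forall {u v : Fin k → ZMod 2}
    (h : ∀ m, BoolDependsOn g m → u m = v m) : g u = g v := by
  classical
  suffices ∀ s : Finset (Fin k), ∀ w, (∀ m ∉ s, w m = v m) →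
      (∀ m, BoolDependsOn g m → w m = v m) → g w = g v from
    this Finset.univ u (by simp) h
  intro s
  induction s using Finset.induction_on with
  | empty => exact fun w hw _ => congrArg g (funext fun m => hw m (Finset.notMem_empty m))
  | @insert a s _ ih =>
    intro w hw hdep
    have hstep : g w = g (Function.update w a (v a)) := by
      by_cases ha : BoolDependsOn g a
      · rw [← hdep a ha, Function.update_eq_self]
      · by_contra hne
        exact ha ⟨w, _, fun m hm => (Function.update_of_ne hm _ _).symm, hne⟩
    refine hstep.trans (ih _ (fun m hm => ?_) (fun m hm => ?_)) <;>
      rcases eq_or_ne m a with rfl | hma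
    · simp
    · simpa [hma] using hw m (by simp [hma, hm])
    · simp
    · simpa [hma] using hdep m hm

end DependsOn

section Toggle

variable {A : Type*} [AddCommGroupWithOne A] {k : ℕ}

def window (x : A → ZMod 2) (a : A) : Fin k → ZMod 2 :=
  fun m => x (a + (m : ℕ))

def slidingMap (f : (Fin k → ZMod 2) → ZMod 2) (x : A → ZMod 2) (i : A) : ZMod 2 :=
  f (window x i)

def toggleMap (g : (Fin k → ZMod 2) → ZMod 2) (j : Fin k) (x : A → ZMod 2) (i : A) : ZMod 2 :=
  x i + g (window x (i - (j : ℕ)))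

variable (A) in
def ShiftOrthogonal (g : (Fin k → ZMod 2) → ZMod 2) (j : Fin k) : Prop :=
  ∀ c, BoolDependsOn g c → ∀ (x : A → ZMod 2) (a : A),
    g (window x a) * g (window x (a + (c : ℕ) - (j : ℕ))) = 0

variable {g : (Fin k → ZMod 2) → ZMod 2} {j : Fin k}

theorem apply_window_toggleMap_of_forall {x : A → ZMod 2} {a : A}
    (h : ∀ m, BoolDependsOn g m → g (window x (a + (m : ℕ) - (j : ℕ))) = 0) :
    g (window (toggleMap g j x) a) = g (window x a) :=
  BoolDependsOn.apply_eq_of_forall fun m hm => by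
    simp only [window, toggleMap]
    rw [h m hm, add_zero]

namespace ShiftOrthogonal

theorem apply_window_toggleMap_of_eq_one (hg : ShiftOrthogonal A g j) {x : A → ZMod 2} {a : A}
    (ha : g (window x a) = 1) : g (window (toggleMap g j x) a) = 1 :=
  (apply_window_toggleMap_of_forall fun m hm => by simpa [ha] using hg m hm x a).trans ha

theorem apply_window_toggleMap (hg : ShiftOrthogonal A g j) (x : A → ZMod 2) (a : A) :
    g (window (toggleMap g j x) a) = g (window x a) := by
  by_cases ha : g (window x a) = 1
  · rw [hg.apply_window_toggleMap_of_eq_one ha, ha]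
  by_cases hc : ∃ c, BoolDependsOn g c ∧ g (window x (a + (c : ℕ) - (j : ℕ))) = 1
  · obtain ⟨c, hc, hxc⟩ := hc
    -- `g` still fires at the shifted window of the toggled configuration, so it cannot fire at `a`
    have := hg c hc (toggleMap g j x) a
    rw [hg.apply_window_toggleMap_of_eq_one hxc, mul_one] at this
    rw [this, ZMod.eq_zero_of_ne_one ha]
  · push Not at hc
    exact apply_window_toggleMap_of_forall fun m hm => ZMod.eq_zero_of_ne_one (hc m hm)

theorem toggleMap_involutive (hg : ShiftOrthogonal A g j) :
    Function.Involutive (toggleMap (A := A) g j) := fun x => funext fun i => by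
  rw [toggleMap, hg.apply_window_toggleMap, toggleMap, add_assoc, CharTwo.add_self_eq_zero,
    add_zero]

end ShiftOrthogonal

theorem slidingMap_apply_eq_toggleMap (f : (Fin k → ZMod 2) → ZMod 2) (j : Fin k)
    (x : A → ZMod 2) (i : A) :
    slidingMap f x i = toggleMap (fun w => f w + w j) j x (i + (j : ℕ)) := by
  rw [toggleMap, add_sub_cancel_right, slidingMap, window, add_left_comm,
    CharTwo.add_self_eq_zero, add_zero]

theorem slidingMap_bijective {f : (Fin k → ZMod 2) → ZMod 2}
    (hf : ShiftOrthogonal A (fun w => f w + w j) j) :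
    Function.Bijective (slidingMap (A := A) f) := by
  have htranslate : Function.Bijective fun (y : A → ZMod 2) i => y (i + (j : ℕ)) :=
    ((Equiv.subRight ((j : ℕ) : A)).arrowCongr (Equiv.refl _)).bijective
  have heq : slidingMap f = (fun (y : A → ZMod 2) i => y (i + (j : ℕ))) ∘
      toggleMap (fun w => f w + w j) j :=
    funext fun x => funext (slidingMap_apply_eq_toggleMap f j x)
  rw [heq]
  exact htranslate.comp hf.toggleMap_involutive.bijective

theorem shiftOrthogonal_of_int
    (h : ∀ c : Fin k, BoolDependsOn g c → ∀ x : ℤ → ZMod 2,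
      g (fun m => x ((m : ℕ) : ℤ)) * g (fun m => x (((m : ℕ) : ℤ) + (((c : ℕ) : ℤ) - ((j : ℕ) : ℤ))))
        = 0) :
    ShiftOrthogonal A g j := by
  intro c hc x a
  convert h c hc fun t => x (a + t) using 3 <;> ext m <;> simp only [window] <;> push_cast
  · rfl
  · abel_nf

end Toggle

/-- Let `f : F_2^k → F_2` have diameter `k` (it depends on its first and
last variables). Suppose for some coordinate `j` (0-based here; the 1-based `j` of the
paper is `j+1`) the function `g(x) := f(x) ⊕ x_j` does not depend on `x_j`, and for
every coordinate `c` on which `g` depends (`c = j + t`, i.e. `t = c - j` ranges over the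
offsets `1-j ≤ t ≤ k-j` in the 1-based formulation), the product
`g(x_1,…,x_k) · g(x_{1+t},…,x_{k+t})` is identically `0` as a function of a bi-infinite
assignment of the variables. Then `f` is a `(k,n)`-lifting for every `n ≥ k`. -/
theorem stmt1 (k : ℕ) (f : (Fin k → ZMod 2) → ZMod 2)
    (j : Fin k)
    (hprod : ∀ c : Fin k, BoolDependsOn (fun x => f x + x j) c →
      ∀ x : ℤ → ZMod 2,
        (f (fun m => x ((m : ℕ) : ℤ)) + x ((j : ℕ) : ℤ)) *
          (f (fun m => x (((m : ℕ) : ℤ) + (((c : ℕ) : ℤ) - ((j : ℕ) : ℤ)))) +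
            x (((j : ℕ) : ℤ) + (((c : ℕ) : ℤ) - ((j : ℕ) : ℤ)))) = 0) :
    ∀ n, k ≤ n → Function.Bijective (induced k n f) :=
  fun _ _ => slidingMap_bijective (shiftOrthogonal_of_int hprod)
end

section
/- Let ε_{1−s} … ε_{−1} ★ ε_1 … ε_{k−s} be a primitive landscape (so each ε_i ∈ {0, 1, −}, with ε_{1−s}, ε_{k−s} ∈ {0, 1}) with associated Boolean function f(x) = x_s ⊕ ∏_{i : ε_i ∈ {0,1}} (x_{s+i} ⊕ ε_i ⊕ 1) on F_2^k. Suppose that for each index d_1 with ε_{d_1} ∈ {0, 1}, there exists d_2 such that ε_{d_2} and ε_{d_1+d_2} are defined and {ε_{d_2}, ε_{d_1+d_2}} = {0, 1}. Then f is a proper lifting, i.e., f is a (k, n)-lifting for every n ≥ k. -/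
/-- A Boolean function `g` depends on the coordinate `i` if there are two inputs
differing only in coordinate `i` on which `g` takes different values. -/
def DependsOn' {k : ℕ} (g : (Fin k → ZMod 2) → ZMod 2) (i : Fin k) : Prop :=
  ∃ x y : Fin k → ZMod 2, (∀ j, j ≠ i → x j = y j) ∧ g x ≠ g y

/-!
Write `c = s0`. The rule reads `F(x)_i = x_{i+c} + [the window of `x` starting at `i` matches
`ε`]`, so `F` is a cyclic shift composed with the map `H` that flips `x_j` exactly when the
window starting at `j - c` matches, i.e. when `j` is the star of a matching window. The
hypothesis on `ε` says that two matching windows can never be a defined offset `p - c` apart: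
the witnesses `p2, p3` would force opposite values at one and the same position. Hence no bit
that `H` flips lies in a defined position of a matching window, `H` does not change which
windows match, and therefore `H` is an involution.
-/

theorem bijective_comp_addRight {G α : Type*} [AddGroup G] (c : G) :
    Function.Bijective fun (z : G → α) (i : G) => z (i + c) :=
  ((Equiv.subRight c).arrowCongr (Equiv.refl α)).bijective

section Landscape

variable {k n : ℕ}

theorem prod_option_elim_add_add_one {ι : Type*} [Fintype ι] (ε : ι → Option (ZMod 2))
    (y : ι → ZMod 2) :
    ∏ p, (ε p).elim 1 (fun b => y p + b + 1) =
      if ∀ p b, ε p = some b → y p = b then 1 else 0 := by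
  have factor : ∀ a b : ZMod 2, a + b + 1 = if a = b then 1 else 0 := by decide
  rw [← Fintype.prod_boole]
  refine Finset.prod_congr rfl fun p _ => ?_
  cases ε p <;> simp [factor]

def Matches (ε : Fin k → Option (ZMod 2)) (x : ZMod n → ZMod 2) (i : ZMod n) : Prop :=
  ∀ p b, ε p = some b → x (i + ((p : ℕ) : ZMod n)) = b

instance (ε : Fin k → Option (ZMod 2)) (x : ZMod n → ZMod 2) :
    DecidablePred (Matches ε x) := fun _ => by
  unfold Matches; infer_instance

def flipCenters (ε : Fin k → Option (ZMod 2)) (c : ZMod n) (x : ZMod n → ZMod 2) :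
    ZMod n → ZMod 2 :=
  fun j => x j + if Matches ε x (j - c) then 1 else 0

def ShiftObstructed (ε : Fin k → Option (ZMod 2)) (c : ZMod n) : Prop :=
  ∀ p1 b1, ε p1 = some b1 → ∃ p2 p3 : Fin k,
    ((p3 : ℕ) : ZMod n) = ((p2 : ℕ) : ZMod n) + ((p1 : ℕ) : ZMod n) - c ∧
    ∃ b2 b3, ε p2 = some b2 ∧ ε p3 = some b3 ∧ b2 ≠ b3

theorem shiftObstructed_of_int {ε : Fin k → Option (ZMod 2)} {s0 : Fin k}
    (h : ∀ p1 : Fin k, (ε p1).isSome →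
      ∃ p2 p3 : Fin k, ((p3 : ℕ) : ℤ) = ((p2 : ℕ) : ℤ) + ((p1 : ℕ) : ℤ) - ((s0 : ℕ) : ℤ) ∧
        ∃ b2 b3 : ZMod 2, ε p2 = some b2 ∧ ε p3 = some b3 ∧ b2 ≠ b3) :
    ShiftObstructed ε ((s0 : ℕ) : ZMod n) := by
  intro p1 b1 hp1
  obtain ⟨p2, p3, hint, hb⟩ := h p1 (by simp [hp1])
  exact ⟨p2, p3, by exact_mod_cast congrArg (fun z : ℤ => (z : ZMod n)) hint, hb⟩

section Obstructed

variable {ε : Fin k → Option (ZMod 2)} {c : ZMod n}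

theorem not_matches_add_sub (hε : ShiftObstructed ε c) {x : ZMod n → ZMod 2} {i : ZMod n}
    (hi : Matches ε x i) {p : Fin k} {b : ZMod 2} (hp : ε p = some b) :
    ¬ Matches ε x (i + ((p : ℕ) : ZMod n) - c) := by
  intro hj
  obtain ⟨p2, p3, hp3, b2, b3, h2, h3, hne⟩ := hε p b hp
  have hsame : i + ((p : ℕ) : ZMod n) - c + ((p2 : ℕ) : ZMod n) = i + ((p3 : ℕ) : ZMod n) := by
    rw [hp3]; ring
  have h2' := hj p2 b2 h2
  rw [hsame, hi p3 b3 h3] at h2'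
  exact hne h2'.symm

theorem matches_flipCenters_of_matches (hε : ShiftObstructed ε c) {x : ZMod n → ZMod 2}
    {i : ZMod n} (hi : Matches ε x i) : Matches ε (flipCenters ε c x) i := by
  intro p b hp
  simp only [flipCenters, if_neg (not_matches_add_sub hε hi hp), add_zero]
  exact hi p b hp

theorem matches_flipCenters_iff (hε : ShiftObstructed ε c) (x : ZMod n → ZMod 2) (i : ZMod n) :
    Matches ε (flipCenters ε c x) i ↔ Matches ε x i := by
  refine ⟨fun hi p b hp => ?_, matches_flipCenters_of_matches hε⟩
  -- a flipped position of a matching window of `flipCenters ε c x` would be the star of a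
  -- window matching in `x`, hence also in `flipCenters ε c x`
  have hflip : ¬ Matches ε x (i + ((p : ℕ) : ZMod n) - c) := fun hj =>
    not_matches_add_sub hε hi hp (matches_flipCenters_of_matches hε hj)
  have := hi p b hp
  simpa only [flipCenters, add_sub_cancel_right, if_neg hflip, add_zero] using this

theorem flipCenters_involutive (hε : ShiftObstructed ε c) :
    Function.Involutive (flipCenters ε c) := by
  intro x
  funext j
  have hadd : ∀ a : ZMod 2, a + a = 0 := by decide
  simp only [flipCenters, matches_flipCenters_iff hε, add_assoc, hadd, add_zero]

end Obstructed

theorem induced_eq_flipCenters (s0 : Fin k) (ε : Fin k → Option (ZMod 2))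
    (x : ZMod n → ZMod 2) (i : ZMod n) :
    induced k n (fun y => y s0 + ∏ p : Fin k, (ε p).elim 1 (fun b => y p + b + 1)) x i =
      flipCenters ε ((s0 : ℕ) : ZMod n) x (i + ((s0 : ℕ) : ZMod n)) := by
  simp only [induced, flipCenters, add_sub_cancel_right, prod_option_elim_add_add_one]
  congr

end Landscape

/-- A primitive landscape is encoded as `ε : Fin k → Option (ZMod 2)`: positions are 0-based
along the whole string, `some b` is the symbol `b ∈ {0,1}` and `none` is `−`; the star sits at
position `s0`, so the offset `d` of the paper is the position `s0 + d`. -/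
theorem stmt3 (k : ℕ) (s0 : Fin k)
    (ε : Fin k → Option (ZMod 2))
    (hcond : ∀ p1 : Fin k, (ε p1).isSome →
      ∃ p2 p3 : Fin k, ((p3 : ℕ) : ℤ) = ((p2 : ℕ) : ℤ) + ((p1 : ℕ) : ℤ) - ((s0 : ℕ) : ℤ) ∧
        ∃ b2 b3 : ZMod 2, ε p2 = some b2 ∧ ε p3 = some b3 ∧ b2 ≠ b3) :
    ∀ n, k ≤ n → Function.Bijective (induced k n
      (fun x => x s0 + ∏ p : Fin k, (ε p).elim 1 (fun b => x p + b + 1))) := by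
  intro n _
  have hF : induced k n (fun x => x s0 + ∏ p : Fin k, (ε p).elim 1 (fun b => x p + b + 1)) =
      (fun z i => z (i + ((s0 : ℕ) : ZMod n))) ∘ flipCenters ε ((s0 : ℕ) : ZMod n) :=
    funext fun x => funext fun i => induced_eq_flipCenters s0 ε x i
  rw [hF]
  exact (bijective_comp_addRight _).comp
    (flipCenters_involutive (shiftObstructed_of_int hcond)).bijective
end

section
/- If f : F_2^{k_f} → F_2 and g : F_2^{k_g} → F_2 are proper liftings, then their composition g ∘ f, defined by (g ∘ f)(x) = g(f(x_1, …, x_{k_f}), f(x_2, …, x_{k_f+1}), …, f(x_{k_g}, …, x_{k_f+k_g−1})) (with variable indices shifted so that x_1 is the first variable on which it depends), is also a proper lifting. -/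
def localComp {kf kg : ℕ} (f : (Fin kf → ZMod 2) → ZMod 2) (g : (Fin kg → ZMod 2) → ZMod 2) :
    (Fin (kf + kg - 1) → ZMod 2) → ZMod 2 :=
  fun x => g fun a => f fun b => x ⟨(a : ℕ) + (b : ℕ), by omega⟩

theorem induced_localComp {kf kg : ℕ} (n : ℕ) (f : (Fin kf → ZMod 2) → ZMod 2)
    (g : (Fin kg → ZMod 2) → ZMod 2) :
    induced (kf + kg - 1) n (localComp f g) = induced kg n g ∘ induced kf n f := by
  funext x i
  simp only [induced, localComp, Function.comp_apply, Nat.cast_add]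
  congr 1
  funext a
  congr 1
  funext b
  congr 1
  ring

theorem not_injective_induced_zero (n : ℕ) (f : (Fin 0 → ZMod 2) → ZMod 2) :
    ¬ Function.Injective (induced 0 n f) := by
  intro hinj
  have hconst : induced 0 n f (fun _ => 0) = induced 0 n f (fun _ => 1) := by
    funext i
    exact congrArg f (Subsingleton.elim _ _)
  simpa using congrFun (hinj hconst) 0

theorem one_le_of_bijective_induced {k : ℕ} (f : (Fin k → ZMod 2) → ZMod 2)
    (hf : ∀ n, k ≤ n → Function.Bijective (induced k n f)) : 1 ≤ k := by
  rcases Nat.eq_zero_or_pos k with rfl | hk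
  · exact absurd (hf 0 le_rfl).1 (not_injective_induced_zero 0 f)
  · exact hk

/-- if `f : F_2^{k_f} → F_2` and `g : F_2^{k_g} → F_2` are proper liftings,
then the composed local rule
`(g ∘ f)(x) = g(f(x_1,…,x_{k_f}), f(x_2,…,x_{k_f+1}), …, f(x_{k_g},…,x_{k_f+k_g-1}))`,
a Boolean function on `k_f + k_g - 1` bits, is also a proper lifting. -/
theorem stmt5 (kf kg : ℕ)
    (f : (Fin kf → ZMod 2) → ZMod 2) (g : (Fin kg → ZMod 2) → ZMod 2)
    (hf : ∀ n, kf ≤ n → Function.Bijective (induced kf n f))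
    (hg : ∀ n, kg ≤ n → Function.Bijective (induced kg n g)) :
    ∀ n, kf + kg - 1 ≤ n → Function.Bijective (induced (kf + kg - 1) n
      (fun x => g fun a => f fun b => x ⟨(a : ℕ) + (b : ℕ), by
        have ha := a.isLt; have hb := b.isLt; omega⟩)) := by
  intro n hn
  have hkf := one_le_of_bijective_induced f hf
  have hkg := one_le_of_bijective_induced g hg
  change Function.Bijective (induced _ n (localComp f g))
  rw [induced_localComp]
  exact (hg n (by omega)).comp (hf n (by omega))
end

section
/- If f : F_2^k → F_2 is a (k, n)-lifting and m ≥ k is a divisor of n, then f is a (k, m)-lifting. -/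
/-!
Precomposition with reduction `ZMod n → ZMod m` is injective on configurations and commutes
with the induced maps, so injectivity of the map on `ZMod n` descends to `ZMod m`. On the
finite configuration space `ZMod m → ZMod 2` an injective self-map is bijective.
-/

open Function

theorem induced_comp_ringHom {k n m : ℕ} (f : (Fin k → ZMod 2) → ZMod 2)
    (φ : ZMod n →+* ZMod m) (x : ZMod m → ZMod 2) :
    induced k n f (x ∘ φ) = induced k m f x ∘ φ := by
  funext i
  simp only [induced, comp_apply, map_add, map_natCast]

theorem injective_induced_of_dvd {k n m : ℕ} {f : (Fin k → ZMod 2) → ZMod 2} (hmn : m ∣ n)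
    (hf : Injective (induced k n f)) : Injective (induced k m f) := by
  intro x y hxy
  apply (ZMod.castHom_surjective hmn).injective_comp_right
  apply hf
  rw [induced_comp_ringHom, induced_comp_ringHom, hxy]

theorem stmt7_general (k n m : ℕ) (f : (Fin k → ZMod 2) → ZMod 2)
    (hmn : m ∣ n)
    (hf : Function.Bijective (induced k n f)) :
    Function.Bijective (induced k m f) := by
  obtain rfl | hm := eq_or_ne m 0
  · obtain rfl : n = 0 := zero_dvd_iff.mp hmn
    exact hf
  · have : NeZero m := ⟨hm⟩
    exact Finite.injective_iff_bijective.mp (injective_induced_of_dvd hmn hf.injective)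

/-- if `f : F_2^k → F_2` is a `(k,n)`-lifting and `m ≥ k` is a divisor
of `n`, then `f` is a `(k,m)`-lifting. -/
theorem stmt7 (k n m : ℕ) (f : (Fin k → ZMod 2) → ZMod 2)
    (hkn : k ≤ n) (hkm : k ≤ m) (hmn : m ∣ n)
    (hf : Function.Bijective (induced k n f)) :
    Function.Bijective (induced k m f) :=
  stmt7_general k n m f hmn hf
end

section
/- Let k and j be integers with 2 ≤ j ≤ k/2, let Ξ = k + 1 − 2j, and let S be a symmetrical subset of {1, 2, …, k} (i.e., l ∈ S if and only if k + 1 − l ∈ S) such that 1 ∈ S and j ∉ S. Suppose S contains an integer t with t ≡ j (mod Ξ). Then the Boolean function f : F_2^k → F_2 given by f(x) = x_j ⊕ (x_{k+1−j} ⊕ 1) ∏_{l ∈ S} x_l is a (k, n)-lifting for every n ≥ k. -/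
/-- A Boolean function `g` depends on the coordinate `i` if there are two inputs
differing only in coordinate `i` on which `g` takes different values. -/
def BoolFunDependsOn {k : ℕ} (g : (Fin k → ZMod 2) → ZMod 2) (i : Fin k) : Prop :=
  ∃ x y : Fin k → ZMod 2, (∀ j, j ≠ i → x j = y j) ∧ g x ≠ g y

/-! Anchor the rule at its special cell: `F(x)_{i-(j-1)} = x_i + [x is "armed" at i]`, where
`x` is armed at `i` when `x_{i+Ξ} = 0` and `x_{i+l-j} = 1` for all `l ∈ S`. If `F x = F y` and
`x_i ≠ y_i`, exactly one of `x, y` is armed at `i`, and the symmetry of `S` forces the other to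
carry a `1` at `i + Ξ`; hence the differences propagate along `i + ℕΞ`. Writing `t - j = (m+1)Ξ`
for some `t ∈ S`, no configuration is armed at two cells `mΞ` or `(m+1)Ξ` apart, so the armed
pattern of `x` alternates along both progressions `i + r(m+1)Ξ` and `i + rmΞ`. They meet at
`i + m(m+1)Ξ` after `m` and `m+1` steps respectively, a parity contradiction. -/

open Function

section FlipRule

variable {G ι : Type*} [AddCommGroup G] (S : Finset ι) (o : ι → G) (c : G)

def flipRule (z : G → ZMod 2) (i : G) : ZMod 2 :=
  z i + (z (i + c) + 1) * ∏ l ∈ S, z (i + o l)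

def IsArmedAt (z : G → ZMod 2) (i : G) : Prop :=
  (∀ l ∈ S, z (i + o l) = 1) ∧ z (i + c) = 0

variable {S o c}

theorem zmod_two_eq_zero_of_ne_one {v : ZMod 2} (h : v ≠ 1) : v = 0 := by
  revert v; decide

theorem zmod_two_eq_one_of_ne_zero {v : ZMod 2} (h : v ≠ 0) : v = 1 := by
  revert v; decide

open Classical in
theorem flipRule_apply (z : G → ZMod 2) (i : G) :
    flipRule S o c z i = z i + if IsArmedAt S o c z i then 1 else 0 := by
  unfold flipRule IsArmedAt
  by_cases hc : z (i + c) = 0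
  · by_cases hS : ∀ l ∈ S, z (i + o l) = 1
    · rw [if_pos ⟨hS, hc⟩, hc, Finset.prod_eq_one hS, zero_add, mul_one]
    · obtain ⟨l, hl, hz⟩ := not_forall₂.mp hS
      rw [if_neg fun h => hS h.1, Finset.prod_eq_zero hl (zmod_two_eq_zero_of_ne_one hz),
        mul_zero]
  · have hc1 : z (i + c) + 1 = 0 := by
      rw [zmod_two_eq_one_of_ne_zero hc]; rfl
    rw [if_neg fun h => hc h.2, hc1, zero_mul]

theorem isArmedAt_iff_not_of_ne {x y : G → ZMod 2} {i : G}
    (hxy : flipRule S o c x i = flipRule S o c y i) (hi : x i ≠ y i) :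
    IsArmedAt S o c x i ↔ ¬ IsArmedAt S o c y i := by
  classical
  rw [flipRule_apply, flipRule_apply] at hxy
  split_ifs at hxy with hx hy hy <;> simp_all

theorem not_isArmedAt_add {z : G → ZMod 2} {i d : G} {l : ι} (hl : l ∈ S) (hd : o l + d = c)
    (hi : IsArmedAt S o c z i) : ¬ IsArmedAt S o c z (i + d) := fun hid => by
  have h := hid.1 l hl
  rw [add_assoc, add_comm d, hd, hi.2] at h
  exact zero_ne_one h

theorem eq_one_of_isArmedAt_of_not_isArmedAt (hsymm : ∀ l ∈ S, ∃ l' ∈ S, o l + o l' = c)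
    {x y : G → ZMod 2} (hxy : flipRule S o c x = flipRule S o c y) {i : G}
    (hx : IsArmedAt S o c x i) (hy : ¬ IsArmedAt S o c y i) : y (i + c) = 1 := by
  by_contra hyc
  obtain ⟨l, hl, hyl⟩ := not_forall₂.mp fun h => hy ⟨h, zmod_two_eq_zero_of_ne_one hyc⟩
  obtain ⟨l', hl', hsum⟩ := hsymm l hl
  -- whichever of `x, y` is armed at `i + o l` needs a `1` at `i + o l + o l' = i + c`,
  -- where both carry `0`
  have hne : x (i + o l) ≠ y (i + o l) := by rw [hx.1 l hl]; exact Ne.symm hyl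
  have hflip := isArmedAt_iff_not_of_ne (congrFun hxy _) hne
  have hpt : i + o l + o l' = i + c := by rw [add_assoc, hsum]
  by_cases hxl : IsArmedAt S o c x (i + o l)
  · have h := hxl.1 l' hl'
    rw [hpt, hx.2] at h
    exact zero_ne_one h
  · have h := (not_not.mp (mt hflip.mpr hxl)).1 l' hl'
    rw [hpt, zmod_two_eq_zero_of_ne_one hyc] at h
    exact zero_ne_one h

theorem ne_add_of_ne (hsymm : ∀ l ∈ S, ∃ l' ∈ S, o l + o l' = c)
    {x y : G → ZMod 2} (hxy : flipRule S o c x = flipRule S o c y) {i : G} (hi : x i ≠ y i) :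
    x (i + c) ≠ y (i + c) := by
  by_cases hx : IsArmedAt S o c x i
  · have hy := (isArmedAt_iff_not_of_ne (congrFun hxy i) hi).mp hx
    rw [hx.2, eq_one_of_isArmedAt_of_not_isArmedAt hsymm hxy hx hy]
    exact zero_ne_one
  · have hy := not_not.mp (mt (isArmedAt_iff_not_of_ne (congrFun hxy i) hi).mpr hx)
    rw [hy.2, eq_one_of_isArmedAt_of_not_isArmedAt hsymm hxy.symm hy hx]
    exact one_ne_zero

theorem ne_add_nsmul_of_ne (hsymm : ∀ l ∈ S, ∃ l' ∈ S, o l + o l' = c)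
    {x y : G → ZMod 2} (hxy : flipRule S o c x = flipRule S o c y) {i : G} (hi : x i ≠ y i)
    (r : ℕ) : x (i + r • c) ≠ y (i + r • c) := by
  induction r with
  | zero => simpa using hi
  | succ r ih => simpa only [succ_nsmul, ← add_assoc] using ne_add_of_ne hsymm hxy ih

theorem isArmedAt_add_nsmul_iff {x y : G → ZMod 2} (hxy : flipRule S o c x = flipRule S o c y)
    {i d : G} (hd : ∀ z j, IsArmedAt S o c z j → ¬ IsArmedAt S o c z (j + d))
    (hne : ∀ r : ℕ, x (i + r • d) ≠ y (i + r • d)) (r : ℕ) :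
    IsArmedAt S o c x (i + r • d) ↔ (IsArmedAt S o c x i ↔ Even r) := by
  induction r with
  | zero => simp
  | succ r ih =>
    have hr := isArmedAt_iff_not_of_ne (congrFun hxy _) (hne r)
    have hr1 := isArmedAt_iff_not_of_ne (congrFun hxy _) (hne (r + 1))
    rw [succ_nsmul, ← add_assoc] at hr1 ⊢
    have hx := hd x (i + r • d)
    have hy := hd y (i + r • d)
    rw [Nat.even_add_one]
    tauto

theorem flipRule_injective (hsymm : ∀ l ∈ S, ∃ l' ∈ S, o l + o l' = c)
    (hwit : ∃ t ∈ S, ∃ m : ℕ, o t = (m + 1) • c) : Injective (flipRule S o c) := by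
  intro x y hxy
  by_contra hne
  obtain ⟨i, hi⟩ := Function.ne_iff.mp hne
  obtain ⟨t, ht, m, hm⟩ := hwit
  obtain ⟨t', ht', hsum⟩ := hsymm t ht
  have hdiff (p r : ℕ) : x (i + r • p • c) ≠ y (i + r • p • c) := by
    rw [smul_smul]; exact ne_add_nsmul_of_ne hsymm hxy hi _
  have hconf_succ (z : G → ZMod 2) (j : G) :
      IsArmedAt S o c z j → ¬ IsArmedAt S o c z (j + (m + 1) • c) :=
    not_isArmedAt_add ht' (by rw [← hm, add_comm, hsum])
  have hconf (z : G → ZMod 2) (j : G) : IsArmedAt S o c z j → ¬ IsArmedAt S o c z (j + m • c) :=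
    fun hj hjm => not_isArmedAt_add (d := -(m • c)) ht (by rw [hm, succ_nsmul]; abel) hjm
      (by rwa [add_neg_cancel_right])
  have h₁ := isArmedAt_add_nsmul_iff hxy hconf_succ (hdiff (m + 1)) m
  have h₂ := isArmedAt_add_nsmul_iff hxy hconf (hdiff m) (m + 1)
  rw [smul_smul] at h₁ h₂
  rw [mul_comm, h₁, Nat.even_add_one] at h₂
  tauto

end FlipRule

theorem exists_mem_sub_eq_succ_mul {k j : ℕ} (hjk : 2 * j ≤ k) {S : Finset ℕ}
    (hS : S ⊆ Finset.Icc 1 k) (hsymm : ∀ l ∈ S, k + 1 - l ∈ S) (hjS : j ∉ S) {t : ℕ}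
    (ht : t ∈ S) (htj : t ≡ j [MOD k + 1 - 2 * j]) :
    ∃ t' ∈ S, ∃ m : ℕ, (t' : ℤ) - j = (m + 1) * (k + 1 - 2 * j) := by
  have htk := (Finset.mem_Icc.mp (hS ht)).2
  obtain ⟨q, hq⟩ := Nat.modEq_iff_dvd.mp htj
  push_cast [Nat.cast_sub (by omega : 2 * j ≤ k + 1)] at hq
  rcases lt_trichotomy q 0 with hq0 | rfl | hq0
  · obtain ⟨m, hm⟩ := Int.eq_ofNat_of_zero_le (by omega : 0 ≤ -q - 1)
    exact ⟨t, ht, m, by linear_combination -hq + ((k : ℤ) + 1 - 2 * j) * hm⟩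
  · exact absurd (by omega : t = j) (fun h => hjS (h ▸ ht))
  · lift q to ℕ using hq0.le
    refine ⟨k + 1 - t, hsymm t ht, q, ?_⟩
    push_cast [Nat.cast_sub (by omega : t ≤ k + 1)]
    linear_combination hq

theorem flipRule_injective_of_symmetric {R : Type*} [CommRing R] {k j : ℕ} (hj : 1 ≤ j)
    (hjk : 2 * j ≤ k) {S : Finset ℕ} (hS : S ⊆ Finset.Icc 1 k) (hsymm : ∀ l ∈ S, k + 1 - l ∈ S)
    (hjS : j ∉ S) (ht : ∃ t ∈ S, t ≡ j [MOD k + 1 - 2 * j]) :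
    Injective (flipRule S (fun l => ((l - 1 : ℕ) : R) - ((j - 1 : ℕ) : R))
      (((k - j : ℕ) : R) - ((j - 1 : ℕ) : R))) := by
  refine flipRule_injective (fun l hl => ⟨k + 1 - l, hsymm l hl, ?_⟩) ?_
  · have hl := Finset.mem_Icc.mp (hS hl)
    have e : (l - 1) + (k + 1 - l - 1) = (k - j) + (j - 1) := by omega
    have hcast := congrArg (Nat.cast : ℕ → R) e
    push_cast at hcast
    linear_combination hcast
  · obtain ⟨t, htS, htj⟩ := ht
    obtain ⟨t', ht', m, hm⟩ := exists_mem_sub_eq_succ_mul hjk hS hsymm hjS htS htj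
    refine ⟨t', ht', m, ?_⟩
    have hcast := congrArg (Int.cast : ℤ → R) hm
    push_cast at hcast
    push_cast [nsmul_eq_mul, Nat.cast_sub (Finset.mem_Icc.mp (hS ht')).1, Nat.cast_sub hj,
      Nat.cast_sub (by omega : j ≤ k)]
    linear_combination hcast

/-- let `2 ≤ j ≤ k/2`, `Ξ = k + 1 - 2j`, and let `S ⊆ {1,…,k}` be
symmetrical (`l ∈ S ↔ k+1-l ∈ S`) with `1 ∈ S`, `j ∉ S`, and containing some `t`
with `t ≡ j (mod Ξ)`. Then `f(x) = x_j ⊕ (x_{k+1-j} ⊕ 1) ∏_{l ∈ S} x_l`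
(1-based indices) is a `(k,n)`-lifting for every `n ≥ k`. -/
theorem stmt11 (k j : ℕ) (hj : 2 ≤ j) (hjk : 2 * j ≤ k)
    (S : Finset ℕ) (hS : S ⊆ Finset.Icc 1 k)
    (hsym : ∀ l ∈ Finset.Icc 1 k, (l ∈ S ↔ k + 1 - l ∈ S))
    (hjS : j ∉ S)
    (ht : ∃ t ∈ S, t % (k + 1 - 2 * j) = j % (k + 1 - 2 * j)) :
    ∀ n, k ≤ n → Function.Bijective (induced k n
      (fun x => x ⟨j - 1, by omega⟩ +
        (x ⟨k - j, by omega⟩ + 1) *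
          ∏ l ∈ S.attach, x ⟨l.1 - 1, by
            have h := hS l.2
            rw [Finset.mem_Icc] at h
            omega⟩)) := by
  intro n hn
  have : NeZero n := ⟨by omega⟩
  rw [← Finite.injective_iff_bijective]
  intro x y hxy
  refine flipRule_injective_of_symmetric (by omega) hjk hS
    (fun l hl => (hsym l (hS hl)).mp hl) hjS ht (funext fun i => ?_)
  have h := congrFun hxy (i - ((j - 1 : ℕ) : ZMod n))
  simp only [induced, sub_add_eq_add_sub, add_sub_assoc, sub_self, add_zero] at h
  rwa [flipRule, flipRule, ← Finset.prod_attach S, ← Finset.prod_attach S]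
end

section
/- Let k and j be integers with 2 ≤ j ≤ k/2, let Ξ = k + 1 − 2j, and let S be a symmetrical subset of {1, 2, …, k} (i.e., l ∈ S if and only if k + 1 − l ∈ S). For n ≥ k define F : F_2^n → F_2^n by F(x)_i = x_i ⊕ (x_{i+Ξ} ⊕ 1) ∏_{l ∈ S} x_{i−j+l}, with indices modulo n. Then for all x ∈ F_2^n and all i, F(F(x))_i = x_i ⊕ (x_{i+2Ξ} ⊕ 1) ∏_{l ∈ S} x_{i−j+l} · x_{i+Ξ−j+l}. -/
/-- A Boolean function `g` depends on the coordinate `i` if there are two inputs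
differing only in coordinate `i` on which `g` takes different values. -/
def DependsOnCoord {k : ℕ} (g : (Fin k → ZMod 2) → ZMod 2) (i : Fin k) : Prop :=
  ∃ x y : Fin k → ZMod 2, (∀ j, j ≠ i → x j = y j) ∧ g x ≠ g y

lemma ZMod.two_eq_zero_or_one (a : ZMod 2) : a = 0 ∨ a = 1 := by
  revert a; decide

namespace WindowFlip

variable {G ι : Type*} [AddCommGroup G] (S : Finset ι) (e : ι → G) (τ : G)

def windowProd (x : G → ZMod 2) (t : G) : ZMod 2 :=
  ∏ l ∈ S, x (t + e l)

def flipMap (x : G → ZMod 2) (t : G) : ZMod 2 :=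
  x t + (x (t + τ) + 1) * windowProd S e x t

def Paired : Prop :=
  ∀ l ∈ S, ∃ l' ∈ S, e l + e l' = τ

variable {S e τ}

lemma windowProd_eq_zero_iff {x : G → ZMod 2} {t : G} :
    windowProd S e x t = 0 ↔ ∃ l ∈ S, x (t + e l) = 0 :=
  Finset.prod_eq_zero_iff

lemma windowProd_eq_one_iff {x : G → ZMod 2} {t : G} :
    windowProd S e x t = 1 ↔ ∀ l ∈ S, x (t + e l) = 1 := by
  refine ⟨fun h l hl => ?_, Finset.prod_eq_one⟩
  refine (x (t + e l)).two_eq_zero_or_one.resolve_left fun h0 => ?_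
  rw [(windowProd_eq_zero_iff).2 ⟨l, hl, h0⟩] at h
  exact zero_ne_one h

lemma windowProd_add_eq_zero (hpair : Paired S e τ) {x : G → ZMod 2}
    {t : G} (hx : x (t + τ) = 0) {l : ι} (hl : l ∈ S) : windowProd S e x (t + e l) = 0 := by
  obtain ⟨l', hl', hsum⟩ := hpair l hl
  exact Finset.prod_eq_zero hl' (by rw [add_assoc, hsum, hx])

lemma windowProd_flipMap_of_apply_add_eq_zero (hpair : Paired S e τ)
    {x : G → ZMod 2} {t : G} (hx : x (t + τ) = 0) :
    windowProd S e (flipMap S e τ x) t = windowProd S e x t :=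
  Finset.prod_congr rfl fun l hl => by
    simp [flipMap, windowProd_add_eq_zero hpair hx hl]

lemma windowProd_flipMap_eq_one {x : G → ZMod 2} {t : G} (ht : windowProd S e x t = 1)
    (htτ : windowProd S e x (t + τ) = 1) : windowProd S e (flipMap S e τ x) t = 1 := by
  rw [windowProd_eq_one_iff] at ht htτ ⊢
  intro l hl
  have hshift : x (t + e l + τ) = 1 := by rw [add_right_comm]; exact htτ l hl
  simp [flipMap, ht l hl, hshift, CharTwo.add_self_eq_zero]

lemma apply_add_eq_one_and_windowProd_add_eq_zero (hpair : Paired S e τ)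
    {x : G → ZMod 2} {t : G} (h0 : windowProd S e x t = 0)
    (h1 : windowProd S e (flipMap S e τ x) t = 1) :
    x (t + τ) = 1 ∧ windowProd S e x (t + τ) = 0 := by
  obtain ⟨l, hl, hxl⟩ := windowProd_eq_zero_iff.1 h0
  have hflip : (x (t + e l + τ) + 1) * windowProd S e x (t + e l) = 1 := by
    simpa [flipMap, hxl] using windowProd_eq_one_iff.1 h1 l hl
  have hxlτ : x (t + e l + τ) = 0 := by
    refine (x _).two_eq_zero_or_one.resolve_right fun h => ?_
    simp [h, CharTwo.add_self_eq_zero] at hflip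
  obtain ⟨l', hl', hsum⟩ := hpair l hl
  refine ⟨?_, windowProd_eq_zero_iff.2 ⟨l, hl, by rwa [add_right_comm]⟩⟩
  have hwin : windowProd S e x (t + e l) = 1 := by simpa [hxlτ] using hflip
  simpa [add_assoc, hsum] using windowProd_eq_one_iff.1 hwin l' hl'

theorem flipMap_flipMap (hpair : Paired S e τ) (x : G → ZMod 2) (t : G) :
    flipMap S e τ (flipMap S e τ x) t =
      x t + (x (t + τ + τ) + 1) * (windowProd S e x t * windowProd S e x (t + τ)) := by
  rw [flipMap, flipMap.eq_def S e τ x t, flipMap.eq_def S e τ x (t + τ)]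
  rcases (windowProd S e x t).two_eq_zero_or_one with hP | hP
  · rcases (windowProd S e (flipMap S e τ x) t).two_eq_zero_or_one with hQ | hQ
    · simp [hP, hQ]
    · obtain ⟨hxτ, hPτ⟩ := apply_add_eq_one_and_windowProd_add_eq_zero hpair hP hQ
      simp [hP, hxτ, hPτ, CharTwo.add_self_eq_zero]
  rcases (x (t + τ)).two_eq_zero_or_one with hxτ | hxτ
  · rw [windowProd_flipMap_of_apply_add_eq_zero hpair hxτ, hP, hxτ]
    grind
  rcases (windowProd S e x (t + τ)).two_eq_zero_or_one with hPτ | hPτ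
  · simp [hP, hxτ, hPτ, CharTwo.add_self_eq_zero]
  · rw [windowProd_flipMap_eq_one hP hPτ, hP, hxτ, hPτ]
    grind

end WindowFlip

lemma paired_of_symmetric {k j n : ℕ} (hjk : 2 * j ≤ k) {S : Finset ℕ}
    (hS : S ⊆ Finset.Icc 1 k) (hsym : ∀ l ∈ Finset.Icc 1 k, (l ∈ S ↔ k + 1 - l ∈ S)) :
    WindowFlip.Paired S (fun l : ℕ => (l : ZMod n) - j) ((k + 1 - 2 * j : ℕ) : ZMod n) := by
  intro l hl
  have hlk : l ≤ k + 1 := by have := Finset.mem_Icc.1 (hS hl); omega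
  refine ⟨k + 1 - l, (hsym l (hS hl)).1 hl, ?_⟩
  simp only [Nat.cast_sub hlk, Nat.cast_sub (by omega : 2 * j ≤ k + 1)]
  push_cast
  ring

theorem stmt12_general (k j n : ℕ) (hjk : 2 * j ≤ k)
    (S : Finset ℕ) (hS : S ⊆ Finset.Icc 1 k)
    (hsym : ∀ l ∈ Finset.Icc 1 k, (l ∈ S ↔ k + 1 - l ∈ S))
    (F : (ZMod n → ZMod 2) → ZMod n → ZMod 2)
    (hF : ∀ (y : ZMod n → ZMod 2) (i : ZMod n),
      F y i = y i + (y (i + ((k + 1 - 2 * j : ℕ) : ZMod n)) + 1) *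
        ∏ l ∈ S, y (i - (j : ZMod n) + (l : ZMod n))) :
    ∀ (x : ZMod n → ZMod 2) (i : ZMod n),
      F (F x) i = x i + (x (i + 2 * ((k + 1 - 2 * j : ℕ) : ZMod n)) + 1) *
        ∏ l ∈ S, x (i - (j : ZMod n) + (l : ZMod n)) *
          x (i + ((k + 1 - 2 * j : ℕ) : ZMod n) - (j : ZMod n) + (l : ZMod n)) := by
  intro x i
  set τ : ZMod n := ((k + 1 - 2 * j : ℕ) : ZMod n)
  have hwindow (y : ZMod n → ZMod 2) (t : ZMod n) :
      ∏ l ∈ S, y (t - (j : ZMod n) + (l : ZMod n)) =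
        WindowFlip.windowProd S (fun l : ℕ => (l : ZMod n) - j) y t :=
    Finset.prod_congr rfl fun l _ => by rw [sub_add_eq_add_sub, add_sub_assoc]
  obtain rfl : F = WindowFlip.flipMap S (fun l : ℕ => (l : ZMod n) - j) τ := by
    funext y t
    rw [hF, hwindow]
    rfl
  rw [WindowFlip.flipMap_flipMap (paired_of_symmetric hjk hS hsym), Finset.prod_mul_distrib,
    hwindow, hwindow, two_mul τ, ← add_assoc]

/-- let `2 ≤ j ≤ k/2`, `Ξ = k + 1 - 2j`, let `S ⊆ {1,…,k}` be
symmetrical, and `n ≥ k`. Define `F : F_2^n → F_2^n` by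
`F(x)_i = x_i ⊕ (x_{i+Ξ} ⊕ 1) ∏_{l ∈ S} x_{i-j+l}` (indices mod `n`). Then
`F(F(x))_i = x_i ⊕ (x_{i+2Ξ} ⊕ 1) ∏_{l ∈ S} x_{i-j+l} x_{i+Ξ-j+l}`. -/
theorem stmt12 (k j n : ℕ) (hj : 2 ≤ j) (hjk : 2 * j ≤ k) (hn : k ≤ n)
    (S : Finset ℕ) (hS : S ⊆ Finset.Icc 1 k)
    (hsym : ∀ l ∈ Finset.Icc 1 k, (l ∈ S ↔ k + 1 - l ∈ S))
    (F : (ZMod n → ZMod 2) → ZMod n → ZMod 2)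
    (hF : ∀ (y : ZMod n → ZMod 2) (i : ZMod n),
      F y i = y i + (y (i + ((k + 1 - 2 * j : ℕ) : ZMod n)) + 1) *
        ∏ l ∈ S, y (i - (j : ZMod n) + (l : ZMod n))) :
    ∀ (x : ZMod n → ZMod 2) (i : ZMod n),
      F (F x) i = x i + (x (i + 2 * ((k + 1 - 2 * j : ℕ) : ZMod n)) + 1) *
        ∏ l ∈ S, x (i - (j : ZMod n) + (l : ZMod n)) *
          x (i + ((k + 1 - 2 * j : ℕ) : ZMod n) - (j : ZMod n) + (l : ZMod n)) :=
  stmt12_general k j n hjk S hS hsym F hF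
end

section
/- For every integer r ≥ 2, the Boolean function f : F_2^{2r} → F_2 given by f(x) = x_r ⊕ Σ_{j=1}^{r−1} (x_j ⊕ 1)(x_{r+j+1} ⊕ 1) (∏_{k=1}^{j} x_{r+k}) (∏_{k=j+1}^{r} (x_k ⊕ 1) ⊕ ∏_{k=j+1}^{r} x_k) is a (2r, n)-lifting for every n ≥ 2r. -/
/-!
Read a configuration `x : ℤ/n → F_2` as a cyclic word and call a factor `0 0^a 1^(r-a) 0`
(`a < r`) a block of type `a`. Two distinct blocks start more than `r` positions apart. Let `G`
flip, in each block of type `a ≥ 1`, its last `0` (offset `a`), and in each block of type `0`,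
its `1`s at offsets `1, …, r - 1`. Then the blocks of `G x` are exactly those of `x`, with each
type `a` lowered to `a - 1 (mod r)`, so `G` is undone by flipping, in each block of type `b` of
`G x`, the offsets that `G` flips in blocks of type `b + 1 (mod r)`; hence `G` is injective.
The `j`-th summand of `f` is the indicator that the window carries a block of type `r - j` or
`0` starting at position `j`, i.e. that `G` flips the window's position `r` because of a block
starting at `j`; at most one `j` qualifies, so `F(x)_i = G(x)_{i+r-1}`.
-/

open Finset

namespace Lifting

/-- The `t`-th letter (`0 ≤ t ≤ r + 1`) of the block word `0 0^a 1^(r-a) 0`. -/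
def blockWord (r a t : ℕ) : ZMod 2 := if a < t ∧ t ≤ r then 1 else 0

def IsBlockWord (r a : ℕ) (v : ℕ → ZMod 2) : Prop :=
  ∀ t ≤ r + 1, v t = blockWord r a t

instance (r a : ℕ) (v : ℕ → ZMod 2) : Decidable (IsBlockWord r a v) := by
  unfold IsBlockWord; infer_instance

variable {r n : ℕ}

lemma isBlockWord_congr {a : ℕ} {v w : ℕ → ZMod 2} (h : ∀ t ≤ r + 1, v t = w t) :
    IsBlockWord r a v ↔ IsBlockWord r a w :=
  forall₂_congr fun t ht => by rw [h t ht]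

lemma isBlockWord_iff {a : ℕ} {v : ℕ → ZMod 2} (ha : a ≤ r) :
    IsBlockWord r a v ↔ v 0 = 0 ∧ v (r + 1) = 0 ∧ (∀ t, 1 ≤ t → t ≤ a → v t = 0) ∧
      ∀ t, a < t → t ≤ r → v t = 1 := by
  constructor
  · intro h
    have hv : ∀ t ≤ r + 1, v t = if a < t ∧ t ≤ r then 1 else 0 := h
    exact ⟨by rw [hv 0 (by omega), if_neg (by omega)],
      by rw [hv (r + 1) le_rfl, if_neg (by omega)],
      fun t h1 h2 => by rw [hv t (by omega), if_neg (by omega)],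
      fun t h1 h2 => by rw [hv t (by omega), if_pos ⟨h1, h2⟩]⟩
  · rintro ⟨h0, hr, hlo, hhi⟩ t ht
    unfold blockWord
    split_ifs with h
    · exact hhi t h.1 h.2
    · obtain rfl | ht' | rfl : t = 0 ∨ (1 ≤ t ∧ t ≤ a) ∨ t = r + 1 := by omega
      exacts [h0, hlo t ht'.1 ht'.2, hr]

lemma exists_blockWord_ne {a a' d : ℕ} (ha : a < r) (ha' : a' < r) (hd : d ≤ r)
    (hne : d ≠ 0 ∨ a ≠ a') :
    ∃ t, d ≤ t ∧ t ≤ r + 1 ∧ blockWord r a t ≠ blockWord r a' (t - d) := by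
  have witness : ∀ t, d ≤ t → t ≤ r + 1 → ((a < t ∧ t ≤ r) ↔ ¬(a' < t - d ∧ t - d ≤ r)) →
      ∃ t, d ≤ t ∧ t ≤ r + 1 ∧ blockWord r a t ≠ blockWord r a' (t - d) := by
    intro t h1 h2 h3
    refine ⟨t, h1, h2, ?_⟩
    unfold blockWord
    split_ifs <;> simp_all
  rcases Nat.eq_zero_or_pos d with rfl | hd0
  · exact witness (min a a' + 1) (by omega) (by omega) (by omega)
  · by_cases had : a < d
    · exact witness d le_rfl (by omega) (by omega)
    · by_cases hsum : a' + d ≤ r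
      · exact witness (r + 1) (by omega) le_rfl (by omega)
      · exact witness (a + 1) (by omega) (by omega) (by omega)

lemma IsBlockWord.eq_of_shift {a a' d : ℕ} {v : ℕ → ZMod 2} (hv : IsBlockWord r a v)
    (hw : IsBlockWord r a' fun t => v (d + t)) (ha : a < r) (ha' : a' < r) (hd : d ≤ r) :
    d = 0 ∧ a = a' := by
  by_contra hne
  obtain ⟨t, hdt, htr, hne⟩ := exists_blockWord_ne ha ha' hd (by omega)
  have h := hw (t - d) (by omega)
  simp only [Nat.add_sub_cancel' hdt, hv t htr] at h
  exact hne h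

lemma IsBlockWord.eq_of_shifts {a a' j j' : ℕ} {v : ℕ → ZMod 2}
    (h : IsBlockWord r a fun t => v (j + t)) (h' : IsBlockWord r a' fun t => v (j' + t))
    (ha : a < r) (ha' : a' < r) (hj : j ≤ j' + r) (hj' : j' ≤ j + r) : j = j' ∧ a = a' := by
  wlog hle : j ≤ j' generalizing a a' j j'
  · obtain ⟨h1, h2⟩ := this h' h ha' ha hj' hj (by omega)
    exact ⟨h1.symm, h2.symm⟩
  have := h.eq_of_shift (d := j' - j)
    (by simpa only [← add_assoc, Nat.add_sub_cancel' hle] using h') ha ha' (by omega)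
  omega

def IsBlock (r a : ℕ) (q : ZMod n) (x : ZMod n → ZMod 2) : Prop :=
  IsBlockWord r a fun t => x (q + t)

lemma isBlock_add_iff {a d : ℕ} {q : ZMod n} {x : ZMod n → ZMod 2} :
    IsBlock r a (q + (d : ZMod n)) x ↔ IsBlockWord r a fun t => x (q + ((d + t : ℕ) : ZMod n)) := by
  simp only [IsBlock, Nat.cast_add, add_assoc]

lemma IsBlock.eq_of_add_eq {a a' s s' : ℕ} {q q' : ZMod n} {x : ZMod n → ZMod 2}
    (h : IsBlock r a q x) (h' : IsBlock r a' q' x) (he : q + s = q' + s')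
    (ha : a < r) (ha' : a' < r) (hs : s ≤ s' + r) (hs' : s' ≤ s + r) : s = s' ∧ a = a' := by
  wlog hle : s' ≤ s generalizing a a' s s' q q'
  · obtain ⟨h1, h2⟩ := this h' h he.symm ha' ha hs' hs (by omega)
    exact ⟨h1.symm, h2.symm⟩
  have hq : q' = q + ((s - s' : ℕ) : ZMod n) := by
    rw [Nat.cast_sub hle]
    linear_combination -he
  rw [hq, isBlock_add_iff] at h'
  have := h.eq_of_shift h' ha ha' (by omega)
  omega

def IsFlipOffset (r a s : ℕ) : Prop := 1 ≤ s ∧ s < r ∧ (a ≠ 0 → s = a)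

instance (r a s : ℕ) : Decidable (IsFlipOffset r a s) := by
  unfold IsFlipOffset; infer_instance

/-- `p` sits at a flip offset of `σ a` from a block of type `a`. With `σ = id`, `flipMap` below
is the map `G` of the proof sketch; with `σ = cycSucc r`, it is its inverse. -/
def IsFlipSite (r : ℕ) (σ : ℕ → ℕ) (x : ZMod n → ZMod 2) (p : ZMod n) : Prop :=
  ∃ a s : ℕ, ∃ q : ZMod n, a < r ∧ IsFlipOffset r (σ a) s ∧ q + s = p ∧ IsBlock r a q x

open Classical in
noncomputable def flipMap (r : ℕ) (σ : ℕ → ℕ) (x : ZMod n → ZMod 2) (p : ZMod n) : ZMod 2 :=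
  x p + if IsFlipSite r σ x p then 1 else 0

def cycSucc (r a : ℕ) : ℕ := if a + 1 = r then 0 else a + 1

lemma cycSucc_lt {a : ℕ} (ha : a < r) : cycSucc r a < r := by
  unfold cycSucc
  split_ifs <;> omega

lemma exists_cycSucc_eq {a : ℕ} (ha : a < r) : ∃ b < r, cycSucc r b = a := by
  refine ⟨if a = 0 then r - 1 else a - 1, by split_ifs <;> omega, ?_⟩
  unfold cycSucc
  split_ifs <;> omega

lemma blockWord_cycSucc_add (a t : ℕ) :
    blockWord r (cycSucc r a) t + (if IsFlipOffset r (cycSucc r a) t then 1 else 0) =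
      blockWord r a t := by
  unfold blockWord cycSucc IsFlipOffset
  split_ifs <;> first | rfl | omega

lemma IsBlock.isFlipSite_iff {σ : ℕ → ℕ} {a t : ℕ} {q : ZMod n} {x : ZMod n → ZMod 2}
    (h : IsBlock r a q x) (ha : a < r) (ht : t ≤ r + 1) :
    IsFlipSite r σ x (q + t) ↔ IsFlipOffset r (σ a) t := by
  constructor
  · rintro ⟨a₀, s, q₀, ha₀, hs, he, h₀⟩
    have ⟨hs1, hsr, _⟩ := hs
    obtain ⟨rfl, rfl⟩ := h₀.eq_of_add_eq h he ha₀ ha (by omega) (by omega)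
    exact hs
  · exact fun hs => ⟨a, t, q, ha, hs, rfl, h⟩

open Classical in
lemma IsBlock.isBlock_flipMap {a : ℕ} {q : ZMod n} {x : ZMod n → ZMod 2}
    (h : IsBlock r (cycSucc r a) q x) (ha : a < r) : IsBlock r a q (flipMap r id x) := by
  intro t ht
  change x (q + t) + (if IsFlipSite r id x (q + t) then 1 else 0) = blockWord r a t
  have hx : x (q + t) = blockWord r (cycSucc r a) t := h t ht
  rw [if_congr (h.isFlipSite_iff (cycSucc_lt ha) ht) rfl rfl, hx]
  exact blockWord_cycSucc_add a t

lemma isBlock_flipMap_iff {a : ℕ} {q : ZMod n} {x : ZMod n → ZMod 2} (ha : a < r) :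
    IsBlock r a q (flipMap r id x) ↔ IsBlock r (cycSucc r a) q x := by
  refine ⟨fun h => ?_, fun h => h.isBlock_flipMap ha⟩
  by_cases hsite : ∃ t ≤ r + 1, IsFlipSite r id x (q + t)
  · obtain ⟨t, ht, a₀, s, q₀, ha₀, ⟨hs1, hsr, -⟩, he, h₀⟩ := hsite
    obtain ⟨b, hb, rfl⟩ := exists_cycSucc_eq ha₀
    obtain ⟨rfl, rfl⟩ := (h₀.isBlock_flipMap hb).eq_of_add_eq h he hb ha (by omega) (by omega)
    rwa [add_right_cancel he] at h₀
  -- Otherwise the block is already one of `x`, whose image is a block of type `b` with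
  -- `cycSucc r b = a` at the same place; uniqueness forces `b = a`.
  · push Not at hsite
    have hx : IsBlock r a q x :=
      (isBlockWord_congr fun t ht => by rw [flipMap, if_neg (hsite t ht), add_zero]).1 h
    obtain ⟨b, hb, hba⟩ := exists_cycSucc_eq ha
    obtain ⟨-, rfl⟩ := ((hba ▸ hx).isBlock_flipMap hb).eq_of_add_eq (s := 0) (s' := 0) h rfl
      hb ha (by omega) (by omega)
    rwa [hba]

lemma isFlipSite_flipMap_iff {x : ZMod n → ZMod 2} {p : ZMod n} :
    IsFlipSite r (cycSucc r) (flipMap r id x) p ↔ IsFlipSite r id x p := by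
  constructor
  · rintro ⟨a, s, q, ha, hs, hp, h⟩
    exact ⟨cycSucc r a, s, q, cycSucc_lt ha, hs, hp, (isBlock_flipMap_iff ha).1 h⟩
  · rintro ⟨a, s, q, ha, hs, hp, h⟩
    obtain ⟨b, hb, rfl⟩ := exists_cycSucc_eq ha
    exact ⟨b, s, q, hb, hs, hp, h.isBlock_flipMap hb⟩

open Classical in
lemma flipMap_leftInverse :
    Function.LeftInverse (flipMap (n := n) r (cycSucc r)) (flipMap r id) := by
  intro x
  funext p
  rw [flipMap, if_congr isFlipSite_flipMap_iff rfl rfl]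
  exact CharTwo.add_cancel_right (x p) _

lemma prod_eq_ite_forall_eq_one {ι : Type*} (s : Finset ι) (v : ι → ZMod 2) :
    ∏ i ∈ s, v i = if ∀ i ∈ s, v i = 1 then 1 else 0 := by
  rw [← prod_boole]
  refine prod_congr rfl fun i _ => ?_
  generalize v i = c
  revert c
  decide

lemma add_one_eq_ite (c : ZMod 2) : c + 1 = if c = 0 then 1 else 0 := by
  revert c
  decide

lemma prod_add_one_eq_ite_forall_eq_zero {ι : Type*} (s : Finset ι) (v : ι → ZMod 2) :
    ∏ i ∈ s, (v i + 1) = if ∀ i ∈ s, v i = 0 then 1 else 0 := by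
  rw [← prod_boole]
  exact prod_congr rfl fun i _ => add_one_eq_ite (v i)

lemma ite_add_ite_of_not_and {M : Type*} [AddMonoidWithOne M] {P Q : Prop} [Decidable P]
    [Decidable Q] (h : ¬(P ∧ Q)) :
    ((if P then 1 else 0) + if Q then 1 else 0 : M) = if P ∨ Q then 1 else 0 := by
  by_cases hP : P <;> by_cases hQ : Q <;> simp_all

lemma sum_ite_eq_ite_exists {ι M : Type*} [AddCommMonoid M] (s : Finset ι) (p : ι → Prop)
    [DecidablePred p] (b : M) (h : ∀ i ∈ s, ∀ j ∈ s, p i → p j → i = j) :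
    ∑ i ∈ s, (if p i then b else 0) = if ∃ i ∈ s, p i then b else 0 := by
  split_ifs with hex
  · obtain ⟨i, hi, hpi⟩ := hex
    rw [sum_eq_single_of_mem i hi fun j hj hji => if_neg fun hpj => hji (h j hj i hi hpj hpi),
      if_pos hpi]
  · exact sum_eq_zero fun i hi => if_neg fun hpi => hex ⟨i, hi, hpi⟩

/-- The rule `f` of the theorem, read on `y m = x_m` (`1 ≤ m ≤ 2r`). -/
def localRule (r : ℕ) (y : ℕ → ZMod 2) : ZMod 2 :=
  y r + ∑ j ∈ Icc 1 (r - 1),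
    (y j + 1) * (y (r + j + 1) + 1) * (∏ m ∈ Icc 1 j, y (r + m)) *
      ((∏ m ∈ Icc (j + 1) r, (y m + 1)) + ∏ m ∈ Icc (j + 1) r, y m)

lemma localRule_summand_condition_iff {j : ℕ} (y : ℕ → ZMod 2) (hj : 1 ≤ j) (hjr : j < r) :
    (y j = 0 ∧ y (r + j + 1) = 0 ∧ (∀ m ∈ Icc 1 j, y (r + m) = 1) ∧
      ((∀ m ∈ Icc (j + 1) r, y m = 0) ∨ ∀ m ∈ Icc (j + 1) r, y m = 1)) ↔
    IsBlockWord r (r - j) (fun t => y (j + t)) ∨ IsBlockWord r 0 (fun t => y (j + t)) := by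
  have hhi : (∀ m ∈ Icc 1 j, y (r + m) = 1) ↔ ∀ t, r - j < t → t ≤ r → y (j + t) = 1 := by
    refine ⟨fun h t h1 h2 => ?_, fun h m hm => ?_⟩
    · rw [show j + t = r + (j + t - r) by omega]
      exact h _ (mem_Icc.2 ⟨by omega, by omega⟩)
    · rw [mem_Icc] at hm
      rw [show r + m = j + (r + m - j) by omega]
      exact h _ (by omega) (by omega)
  have hlo (c : ZMod 2) :
      (∀ m ∈ Icc (j + 1) r, y m = c) ↔ ∀ t, 1 ≤ t → t ≤ r - j → y (j + t) = c := by
    refine ⟨fun h t h1 h2 => h _ (mem_Icc.2 ⟨by omega, by omega⟩), fun h m hm => ?_⟩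
    rw [mem_Icc] at hm
    rw [show m = j + (m - j) by omega]
    exact h _ (by omega) (by omega)
  have hsplit (P : ℕ → Prop) : (∀ t, 0 < t → t ≤ r → P t) ↔
      (∀ t, 1 ≤ t → t ≤ r - j → P t) ∧ ∀ t, r - j < t → t ≤ r → P t :=
    ⟨fun h => ⟨fun t h1 h2 => h t h1 (by omega), fun t h1 h2 => h t (by omega) h2⟩,
      fun h t h1 h2 => if ht : t ≤ r - j then h.1 t h1 ht else h.2 t (by omega) h2⟩
  rw [isBlockWord_iff (by omega), isBlockWord_iff (Nat.zero_le _), hhi, hlo, hlo, hsplit,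
    add_zero, show j + (r + 1) = r + j + 1 by omega]
  constructor
  · rintro ⟨h0, hR, h1, h2 | h2⟩
    · exact Or.inl ⟨h0, hR, h2, h1⟩
    · exact Or.inr ⟨h0, hR, fun t h h' => by omega, h2, h1⟩
  · rintro (⟨h0, hR, h2, h1⟩ | ⟨h0, hR, -, h2, h1⟩)
    · exact ⟨h0, hR, h1, Or.inl h2⟩
    · exact ⟨h0, hR, h1, Or.inr h2⟩

lemma localRule_summand_eq_ite {j : ℕ} (y : ℕ → ZMod 2) (hj : 1 ≤ j) (hjr : j < r) :
    (y j + 1) * (y (r + j + 1) + 1) * (∏ m ∈ Icc 1 j, y (r + m)) *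
        ((∏ m ∈ Icc (j + 1) r, (y m + 1)) + ∏ m ∈ Icc (j + 1) r, y m) =
      if IsBlockWord r (r - j) (fun t => y (j + t)) ∨ IsBlockWord r 0 (fun t => y (j + t))
      then 1 else 0 := by
  classical
  have hexcl : ¬((∀ m ∈ Icc (j + 1) r, y m = 0) ∧ ∀ m ∈ Icc (j + 1) r, y m = 1) := fun h => by
    have hmem : j + 1 ∈ Icc (j + 1) r := mem_Icc.2 ⟨le_rfl, hjr⟩
    exact absurd ((h.1 _ hmem).symm.trans (h.2 _ hmem)) (by decide)
  rw [prod_add_one_eq_ite_forall_eq_zero, add_one_eq_ite, add_one_eq_ite,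
    prod_eq_ite_forall_eq_one, prod_eq_ite_forall_eq_one, ite_add_ite_of_not_and hexcl]
  simp only [ite_zero_mul_ite_zero, mul_one, and_assoc]
  exact if_congr (localRule_summand_condition_iff y hj hjr) rfl rfl

lemma localRule_eq (y : ℕ → ZMod 2) :
    localRule r y = y r + if ∃ j ∈ Icc 1 (r - 1),
      IsBlockWord r (r - j) (fun t => y (j + t)) ∨ IsBlockWord r 0 (fun t => y (j + t))
      then 1 else 0 := by
  have hmem : ∀ j ∈ Icc 1 (r - 1), 1 ≤ j ∧ j < r := fun j hj => by rw [mem_Icc] at hj; omega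
  rw [localRule, sum_congr rfl fun j hj => localRule_summand_eq_ite y (hmem j hj).1 (hmem j hj).2,
    sum_ite_eq_ite_exists]
  have hblock : ∀ j ∈ Icc 1 (r - 1), (IsBlockWord r (r - j) (fun t => y (j + t)) ∨
      IsBlockWord r 0 (fun t => y (j + t))) → ∃ a < r, IsBlockWord r a (fun t => y (j + t)) :=
    fun j hj hC => hC.elim (fun h => ⟨_, by have := hmem j hj; omega, h⟩)
      (fun h => ⟨0, by have := hmem j hj; omega, h⟩)
  intro j hj j' hj' hC hC'
  obtain ⟨a, ha, h⟩ := hblock j hj hC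
  obtain ⟨a', ha', h'⟩ := hblock j' hj' hC'
  have := hmem j hj
  have := hmem j' hj'
  exact (h.eq_of_shifts h' ha ha' (by omega) (by omega)).1

lemma localRule_eq_flipMap (hr : 0 < r) (x : ZMod n → ZMod 2) (i : ZMod n) :
    localRule r (fun m => x (i + (((m - 1) % (2 * r) : ℕ) : ZMod n))) =
      flipMap r id x (i + ((r - 1 : ℕ) : ZMod n)) := by
  classical
  set y : ℕ → ZMod 2 := fun m => x (i + (((m - 1) % (2 * r) : ℕ) : ZMod n))
  have hblock (j a : ℕ) (h1 : 1 ≤ j) (h2 : j < r) :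
      IsBlockWord r a (fun t => y (j + t)) ↔ IsBlock r a (i + ((j - 1 : ℕ) : ZMod n)) x := by
    refine isBlockWord_congr fun t ht => ?_
    simp only [y]
    rw [Nat.mod_eq_of_lt (by omega), show j + t - 1 = j - 1 + t by omega, Nat.cast_add, add_assoc]
  have hyr : y r = x (i + ((r - 1 : ℕ) : ZMod n)) := by
    simp only [y]
    rw [Nat.mod_eq_of_lt (by omega)]
  rw [localRule_eq, flipMap, hyr]
  congr 1
  refine if_congr ⟨?_, ?_⟩ rfl rfl
  · rintro ⟨j, hj, h⟩
    rw [mem_Icc] at hj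
    have hq : i + ((j - 1 : ℕ) : ZMod n) + ((r - j : ℕ) : ZMod n) = i + ((r - 1 : ℕ) : ZMod n) := by
      rw [add_assoc, ← Nat.cast_add, show j - 1 + (r - j) = r - 1 by omega]
    rcases h with h | h
    · exact ⟨r - j, r - j, _, by omega, ⟨by omega, by omega, fun _ => rfl⟩, hq,
        (hblock j _ (by omega) (by omega)).1 h⟩
    · exact ⟨0, r - j, _, by omega, ⟨by omega, by omega, fun h => absurd rfl h⟩, hq,
        (hblock j _ (by omega) (by omega)).1 h⟩
  · rintro ⟨a, s, q, ha, ⟨hs1, hsr, hsa⟩, he, h⟩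
    have hq : q = i + ((r - s - 1 : ℕ) : ZMod n) := add_right_cancel (he.trans
      (by rw [add_assoc, ← Nat.cast_add, show r - s - 1 + s = r - 1 by omega]))
    refine ⟨r - s, mem_Icc.2 ⟨by omega, by omega⟩, ?_⟩
    rw [hblock _ _ (by omega) (by omega), hblock _ _ (by omega) (by omega),
      show r - (r - s) = s by omega, ← hq]
    rcases eq_or_ne a 0 with rfl | ha0
    · exact Or.inr h
    · exact Or.inl (hsa ha0 ▸ h)

end Lifting

/-- for every `r ≥ 2`, the Boolean function `f : F_2^{2r} → F_2` given
(with 1-based indices, realized below through `y m = x_m`) by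
`f(x) = x_r ⊕ Σ_{j=1}^{r-1} (x_j ⊕ 1)(x_{r+j+1} ⊕ 1)(∏_{m=1}^{j} x_{r+m})
(∏_{m=j+1}^{r} (x_m ⊕ 1) ⊕ ∏_{m=j+1}^{r} x_m)` is a `(2r,n)`-lifting for
every `n ≥ 2r`. -/
theorem stmt13 (r : ℕ) (hr : 2 ≤ r) :
    ∀ n, 2 * r ≤ n → Function.Bijective (induced (2 * r) n
      (fun x =>
        let y : ℕ → ZMod 2 := fun m => x ⟨(m - 1) % (2 * r), Nat.mod_lt _ (by omega)⟩
        y r + ∑ j ∈ Finset.Icc 1 (r - 1),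
          (y j + 1) * (y (r + j + 1) + 1) * (∏ m ∈ Finset.Icc 1 j, y (r + m)) *
            ((∏ m ∈ Finset.Icc (j + 1) r, (y m + 1)) +
              ∏ m ∈ Finset.Icc (j + 1) r, y m))) := by
  intro n hn
  have : NeZero n := ⟨by omega⟩
  have hinj : Function.Injective
      ((fun z => z ∘ (· + ((r - 1 : ℕ) : ZMod n))) ∘ Lifting.flipMap (n := n) r id) :=
    (Equiv.addRight _).surjective.injective_comp_right.comp Lifting.flipMap_leftInverse.injective
  convert Finite.injective_iff_bijective.mp hinj using 1
  funext x i
  exact Lifting.localRule_eq_flipMap (by omega) x i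
end

section
/- Let r ≥ 2 be an integer and let n ≥ 2r. Define F : F_2^n → F_2^n by F(x)_i = x_i ⊕ Σ_{j=1}^{r−1} (x_{i−r+j} ⊕ 1)(x_{i+j+1} ⊕ 1) (∏_{k=1}^{j} x_{i+k}) (∏_{k=j+1}^{r} (x_{i−r+k} ⊕ 1) ⊕ ∏_{k=j+1}^{r} x_{i−r+k}), with indices modulo n. Then the r-fold iterate of F is the identity: F^{(r)}(x) = x for all x ∈ F_2^n. -/
open Finset

namespace ZMod

lemma two_eq_zero_or_eq_one (a : ZMod 2) : a = 0 ∨ a = 1 := by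
  revert a; decide

lemma two_add_one_eq_ite (a : ZMod 2) : a + 1 = if a = 0 then 1 else 0 := by
  revert a; decide

lemma two_ite_add_ite {p q : Prop} [Decidable p] [Decidable q] (h : ¬(p ∧ q)) :
    ((if p then 1 else 0 : ZMod 2) + if q then 1 else 0) = if p ∨ q then 1 else 0 := by
  by_cases hp : p <;> by_cases hq : q <;> simp_all

lemma two_prod_eq_ite {ι : Type*} (s : Finset ι) (f : ι → ZMod 2) :
    ∏ m ∈ s, f m = if ∀ m ∈ s, f m = 1 then 1 else 0 := by
  split_ifs with h
  · exact prod_eq_one h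
  · push Not at h
    obtain ⟨m, hm, hfm⟩ := h
    exact prod_eq_zero hm ((two_eq_zero_or_eq_one (f m)).resolve_right hfm)

lemma two_prod_add_one_eq_ite {ι : Type*} (s : Finset ι) (f : ι → ZMod 2) :
    ∏ m ∈ s, (f m + 1) = if ∀ m ∈ s, f m = 0 then 1 else 0 := by
  simp only [two_prod_eq_ite, add_eq_right]

end ZMod

namespace CyclingRule

variable {n : ℕ}

def ruleTerm (r : ℕ) (x : ZMod n → ZMod 2) (i : ZMod n) (j : ℕ) : ZMod 2 :=
  (x (i - (r : ZMod n) + (j : ZMod n)) + 1) * (x (i + (j : ZMod n) + 1) + 1) *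
    (∏ m ∈ Icc 1 j, x (i + (m : ZMod n))) *
    ((∏ m ∈ Icc (j + 1) r, (x (i - (r : ZMod n) + (m : ZMod n)) + 1)) +
      ∏ m ∈ Icc (j + 1) r, x (i - (r : ZMod n) + (m : ZMod n)))

def rule (r : ℕ) (x : ZMod n → ZMod 2) (i : ZMod n) : ZMod 2 :=
  x i + ∑ j ∈ Icc 1 (r - 1), ruleTerm r x i j

/-- `x` reads `0 0…0 1…1 0` on the positions `e - r, …, e + 1`, with `ℓ` ones ending at `e`. -/
structure IsActiveRun (r : ℕ) (x : ZMod n → ZMod 2) (e : ZMod n) (ℓ : ℕ) : Prop where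
  pos : 0 < ℓ
  le : ℓ ≤ r
  succ_eq_zero : x (e + 1) = 0
  sub_eq : ∀ k ≤ r, x (e - k) = if k < ℓ then 1 else 0

def InActiveZone (r : ℕ) (x : ZMod n → ZMod 2) (i : ZMod n) : Prop :=
  ∃ e ℓ, IsActiveRun r x e ℓ ∧ ∃ k < r, i = e - k

lemma sub_natCast_sub (e : ZMod n) {a b : ℕ} (h : b ≤ a) :
    e - ((a - b : ℕ) : ZMod n) = e - a + b := by
  push_cast [h]; ring

section

variable {r : ℕ} {x : ZMod n → ZMod 2} {e e' : ZMod n} {ℓ ℓ' : ℕ}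

namespace IsActiveRun

lemma eq_one (h : IsActiveRun r x e ℓ) : x e = 1 := by
  simpa [h.pos] using h.sub_eq 0 (Nat.zero_le r)

lemma len_eq (h : IsActiveRun r x e ℓ) (h' : IsActiveRun r x e ℓ') : ℓ = ℓ' := by
  by_contra hne
  wlog hlt : ℓ < ℓ' generalizing ℓ ℓ'
  · exact this h' h (Ne.symm hne) (by omega)
  have h0 := h.sub_eq ℓ h.le
  rw [h'.sub_eq ℓ h.le, if_pos hlt, if_neg (lt_irrefl ℓ)] at h0
  exact one_ne_zero h0

/-- Two active runs cannot end within distance `r` of each other: `e` or `e + 1` would lie in the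
later window, at a position where that run needs a `0` resp. a `1`. -/
lemma not_add {d : ℕ} (h : IsActiveRun r x e ℓ) (h' : IsActiveRun r x (e + d) ℓ') (hd : 0 < d)
    (hdr : d ≤ r) : False := by
  by_cases hℓ' : ℓ' ≤ d
  · have h0 := h'.sub_eq d hdr
    rw [add_sub_cancel_right, h.eq_one, if_neg (by omega)] at h0
    exact one_ne_zero h0
  · have h1 := h'.sub_eq (d - 1) (by omega)
    rw [sub_natCast_sub _ hd, Nat.cast_one, add_sub_cancel_right, h.succ_eq_zero,
      if_pos (by omega)] at h1
    exact zero_ne_one h1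

lemma eq_of_add_eq (h : IsActiveRun r x e ℓ) (h' : IsActiveRun r x e' ℓ') {a b : ℕ}
    (hab : e + a = e' + b) (ha : a ≤ r) (hb : b ≤ r) : e = e' ∧ a = b := by
  wlog hle : a ≤ b generalizing e e' ℓ ℓ' a b
  · obtain ⟨he, hba⟩ := this h' h hab.symm hb ha (by omega)
    exact ⟨he.symm, hba.symm⟩
  have he : e = e' + ((b - a : ℕ) : ZMod n) := by
    rw [Nat.cast_sub hle, ← add_sub_assoc, ← hab]; ring
  rcases hle.eq_or_lt with rfl | hlt
  · simpa using he
  · exact (h'.not_add (he ▸ h) (Nat.sub_pos_of_lt hlt) (by omega)).elim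

end IsActiveRun

open Classical in
lemma ruleTerm_eq_ite {j : ℕ} (hj : 0 < j) (hjr : j < r) (i : ZMod n) :
    ruleTerm r x i j =
      if IsActiveRun r x (i + j) j ∨ IsActiveRun r x (i + j) r then 1 else 0 := by
  set E := i + (j : ZMod n)
  have hA : i - r + j = E - r := by ring
  have hC : (∀ m ∈ Icc 1 j, x (i + m) = 1) ↔ ∀ d < j, x (E - d) = 1 := by
    refine ⟨fun h d hd => ?_, fun h m hm => ?_⟩
    · have := h (j - d) (mem_Icc.2 ⟨by omega, by omega⟩)
      rwa [Nat.cast_sub hd.le, show i + (j - d) = E - d by ring] at this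
    · have hm := mem_Icc.1 hm
      have := h (j - m) (by omega)
      rwa [Nat.cast_sub hm.2, show E - (j - m) = i + m by ring] at this
  have hD (c : ZMod 2) :
      (∀ m ∈ Icc (j + 1) r, x (i - r + m) = c) ↔ ∀ d, j ≤ d → d < r → x (E - d) = c := by
    refine ⟨fun h d hd hdr => ?_, fun h m hm => ?_⟩
    · have := h (j + r - d) (mem_Icc.2 ⟨by omega, by omega⟩)
      rwa [Nat.cast_sub (by omega), Nat.cast_add, show i - r + (j + r - d) = E - d by ring]
        at this
    · have hm := mem_Icc.1 hm
      have := h (j + r - m) (by omega) (by omega)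
      rwa [Nat.cast_sub (by omega), Nat.cast_add, show E - (j + r - m) = i - r + m by ring]
        at this
  have hexcl : ¬((∀ m ∈ Icc (j + 1) r, x (i - r + m) = 0) ∧
      ∀ m ∈ Icc (j + 1) r, x (i - r + m) = 1) := fun ⟨h0, h1⟩ => by
    have hr : r ∈ Icc (j + 1) r := mem_Icc.2 ⟨hjr, le_rfl⟩
    exact zero_ne_one ((h0 r hr).symm.trans (h1 r hr))
  rw [ruleTerm, ZMod.two_prod_add_one_eq_ite, ZMod.two_prod_eq_ite, ZMod.two_prod_eq_ite,
    ZMod.two_ite_add_ite hexcl, ZMod.two_add_one_eq_ite, ZMod.two_add_one_eq_ite,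
    ite_zero_mul_ite_zero, ite_zero_mul_ite_zero, ite_zero_mul_ite_zero, mul_one, mul_one,
    mul_one]
  refine if_congr ?_ rfl rfl
  rw [hA, hC, hD, hD]
  constructor
  · rintro ⟨⟨⟨hEr, hE1⟩, hones⟩, hrest | hrest⟩
    · refine Or.inl ⟨hj, hjr.le, hE1, fun d hd => ?_⟩
      split_ifs with hdj
      · exact hones d hdj
      · rcases hd.lt_or_eq with hdr | rfl
        · exact hrest d (by omega) hdr
        · exact hEr
    · refine Or.inr ⟨by omega, le_rfl, hE1, fun d hd => ?_⟩
      split_ifs with hdr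
      · exact if hdj : d < j then hones d hdj else hrest d (by omega) hdr
      · rw [show d = r by omega]; exact hEr
  · rintro (h | h) <;>
    refine ⟨⟨⟨(h.sub_eq r le_rfl).trans (if_neg (by omega)), h.succ_eq_zero⟩,
      fun d hd => (h.sub_eq d (by omega)).trans (if_pos (by omega))⟩, ?_⟩
    · exact Or.inl fun d hjd hdr => (h.sub_eq d hdr.le).trans (if_neg (by omega))
    · exact Or.inr fun d _ hdr => (h.sub_eq d hdr.le).trans (if_pos hdr)

open Classical in
lemma sum_ruleTerm_eq (i : ZMod n) :
    ∑ j ∈ Icc 1 (r - 1), ruleTerm r x i j = ∑ j ∈ Icc 1 (r - 1),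
      if IsActiveRun r x (i + j) j ∨ IsActiveRun r x (i + j) r then 1 else 0 :=
  sum_congr rfl fun j hj => by
    obtain ⟨hj1, hjr⟩ := mem_Icc.1 hj
    exact ruleTerm_eq_ite hj1 (by omega) i

lemma rule_apply_of_not_inActiveZone {i : ZMod n} (h : ¬InActiveZone r x i) :
    rule r x i = x i := by
  rw [rule, sum_ruleTerm_eq, sum_eq_zero, add_zero]
  intro j hj
  have hjr : j < r := by have := mem_Icc.1 hj; omega
  rw [if_neg]
  rintro (hrun | hrun) <;> exact h ⟨_, _, hrun, j, hjr, (add_sub_cancel_right i _).symm⟩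

namespace IsActiveRun

open Classical in
/-- Only the term `j = k` can fire at `e - k`, since any other would need a second active run
ending within distance `r` of `e`. -/
lemma sum_ruleTerm_sub (h : IsActiveRun r x e ℓ) {k : ℕ} (hk : k < r) :
    ∑ j ∈ Icc 1 (r - 1), ruleTerm r x (e - k) j = if 0 < k ∧ (ℓ = k ∨ ℓ = r) then 1 else 0 := by
  have hfire : ∀ j ≤ r, (IsActiveRun r x (e - k + j) j ∨ IsActiveRun r x (e - k + j) r) ↔
      k = j ∧ (ℓ = k ∨ ℓ = r) := by
    intro j hj
    constructor
    · rintro (h' | h') <;>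
      obtain ⟨he, rfl⟩ := h.eq_of_add_eq h' (a := j) (b := k) (by ring) hj hk.le <;>
      rw [← he] at h'
      · exact ⟨rfl, Or.inl (h.len_eq h')⟩
      · exact ⟨rfl, Or.inr (h.len_eq h')⟩
    · rintro ⟨rfl, hℓ | hℓ⟩ <;> rw [sub_add_cancel] <;> subst hℓ
      · exact Or.inl h
      · exact Or.inr h
  rw [sum_ruleTerm_eq]
  calc _ = ∑ j ∈ Icc 1 (r - 1), if k = j then (if ℓ = k ∨ ℓ = r then (1 : ZMod 2) else 0) else 0 :=
        sum_congr rfl fun j hj =>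
          (if_congr (hfire j (by have := (mem_Icc.1 hj).2; omega)) rfl rfl).trans (ite_and ..)
    _ = if 0 < k ∧ (ℓ = k ∨ ℓ = r) then 1 else 0 := by
        rw [sum_ite_eq, ite_and]
        exact if_congr (by rw [mem_Icc]; omega) rfl rfl

lemma rule (h : IsActiveRun r x e ℓ) : IsActiveRun r (rule r x) e (ℓ % r + 1) where
  pos := Nat.succ_pos _
  le := Nat.mod_lt _ (h.pos.trans_le h.le)
  succ_eq_zero := by
    rw [rule_apply_of_not_inActiveZone, h.succ_eq_zero]
    rintro ⟨e', ℓ', h', k, hk, hek⟩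
    have := (h.eq_of_add_eq h' (a := k + 1) (b := 0)
      (by push_cast; linear_combination hek) (by omega) (Nat.zero_le r)).2
    omega
  sub_eq k hk := by
    have := h.pos
    rcases hk.lt_or_eq with hk | hk
    · rw [CyclingRule.rule, h.sum_ruleTerm_sub hk, h.sub_eq k hk.le]
      rcases h.le.lt_or_eq with hℓ | rfl
      · rw [Nat.mod_eq_of_lt hℓ]
        split_ifs <;> first | omega | decide
      · rw [Nat.mod_self]
        split_ifs <;> first | omega | decide
    · subst hk
      rw [rule_apply_of_not_inActiveZone, h.sub_eq k le_rfl, if_neg (by have := h.le; omega),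
        if_neg (by have := Nat.mod_lt ℓ (h.pos.trans_le h.le); omega)]
      rintro ⟨e', ℓ', h', k', hk', hek⟩
      have := (h.eq_of_add_eq h' (a := k') (b := k) (by linear_combination hek) hk'.le le_rfl).2
      omega

end IsActiveRun

/-- If no active run of `x` ended at `e`, the whole window `e - r, …, e + 1` would lie outside the
active zones of `x` (active runs of `rule r x` end far apart), so `rule r` would not change it. -/
lemma exists_isActiveRun_of_rule (h : IsActiveRun r (rule r x) e ℓ) :
    ∃ ℓ₀, IsActiveRun r x e ℓ₀ := by
  by_contra hne
  push Not at hne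
  have hfar : ∀ {e' ℓ'} (a b : ℕ), IsActiveRun r x e' ℓ' → a ≤ r → b ≤ r → e + a ≠ e' + b := by
    intro e' ℓ' a b h' ha hb hab
    obtain ⟨rfl, -⟩ := h.eq_of_add_eq h'.rule hab ha hb
    exact hne _ h'
  have hsucc : x (e + 1) = 0 := by
    refine (rule_apply_of_not_inActiveZone ?_).symm.trans h.succ_eq_zero
    rintro ⟨e', ℓ', h', k, hk, hek⟩
    exact hfar (k + 1) 0 h' hk (Nat.zero_le r) (by push_cast; linear_combination hek)
  have hsub : ∀ d ≤ r, x (e - d) = rule r x (e - d) := by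
    intro d hd
    refine (rule_apply_of_not_inActiveZone ?_).symm
    rintro ⟨e', ℓ', h', k, hk, hek⟩
    exact hfar k d h' hk.le hd (by linear_combination hek)
  exact hne ℓ ⟨h.pos, h.le, hsucc, fun d hd => (hsub d hd).trans (h.sub_eq d hd)⟩

lemma inActiveZone_of_rule {i : ZMod n} (h : InActiveZone r (rule r x) i) :
    InActiveZone r x i := by
  obtain ⟨e, ℓ, h, k, hk, rfl⟩ := h
  obtain ⟨ℓ₀, h₀⟩ := exists_isActiveRun_of_rule h
  exact ⟨e, ℓ₀, h₀, k, hk, rfl⟩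

lemma inActiveZone_of_iterate {i : ZMod n} (t : ℕ) (h : InActiveZone r ((rule r)^[t] x) i) :
    InActiveZone r x i := by
  induction t generalizing x with
  | zero => exact h
  | succ t ih =>
    rw [Function.iterate_succ_apply] at h
    exact inActiveZone_of_rule (ih h)

lemma iterate_apply_of_not_inActiveZone {i : ZMod n} (h : ¬InActiveZone r x i) (t : ℕ) :
    (rule r)^[t] x i = x i := by
  induction t with
  | zero => rfl
  | succ t ih =>
    rw [Function.iterate_succ_apply', rule_apply_of_not_inActiveZone
      (fun h' => h (inActiveZone_of_iterate t h')), ih]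

lemma IsActiveRun.iterate (h : IsActiveRun r x e ℓ) (t : ℕ) :
    IsActiveRun r ((CyclingRule.rule r)^[t] x) e ((ℓ - 1 + t) % r + 1) := by
  induction t with
  | zero =>
    rwa [add_zero, Nat.mod_eq_of_lt (by have := h.pos; have := h.le; omega),
      Nat.sub_add_cancel h.pos]
  | succ t ih =>
    rw [Function.iterate_succ_apply', ← add_assoc, ← Nat.mod_add_mod]
    exact ih.rule

theorem rule_iterate_self (x : ZMod n → ZMod 2) : (rule r)^[r] x = x := by
  funext i
  by_cases hi : InActiveZone r x i
  · obtain ⟨e, ℓ, h, k, hk, rfl⟩ := hi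
    have hr := h.iterate r
    rw [Nat.add_mod_right, Nat.mod_eq_of_lt (by have := h.le; omega),
      Nat.sub_add_cancel h.pos] at hr
    rw [hr.sub_eq k hk.le, h.sub_eq k hk.le]
  · exact iterate_apply_of_not_inActiveZone hi r

end

end CyclingRule

theorem stmt14_general (r n : ℕ)
    (F : (ZMod n → ZMod 2) → ZMod n → ZMod 2)
    (hF : ∀ (x : ZMod n → ZMod 2) (i : ZMod n),
      F x i = x i + ∑ j ∈ Finset.Icc 1 (r - 1),
        (x (i - (r : ZMod n) + (j : ZMod n)) + 1) * (x (i + (j : ZMod n) + 1) + 1) *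
          (∏ m ∈ Finset.Icc 1 j, x (i + (m : ZMod n))) *
          ((∏ m ∈ Finset.Icc (j + 1) r, (x (i - (r : ZMod n) + (m : ZMod n)) + 1)) +
            ∏ m ∈ Finset.Icc (j + 1) r, x (i - (r : ZMod n) + (m : ZMod n)))) :
    ∀ x : ZMod n → ZMod 2, F^[r] x = x := by
  obtain rfl : F = CyclingRule.rule r := funext fun x => funext (hF x)
  exact CyclingRule.rule_iterate_self

/-- for `r ≥ 2` and `n ≥ 2r`, the map `F : F_2^n → F_2^n` given by
`F(x)_i = x_i ⊕ Σ_{j=1}^{r-1} (x_{i-r+j} ⊕ 1)(x_{i+j+1} ⊕ 1)(∏_{m=1}^{j} x_{i+m})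
(∏_{m=j+1}^{r} (x_{i-r+m} ⊕ 1) ⊕ ∏_{m=j+1}^{r} x_{i-r+m})` (indices mod `n`)
satisfies `F^{(r)}(x) = x` for all `x`. -/
theorem stmt14 (r n : ℕ) (hr : 2 ≤ r) (hn : 2 * r ≤ n)
    (F : (ZMod n → ZMod 2) → ZMod n → ZMod 2)
    (hF : ∀ (x : ZMod n → ZMod 2) (i : ZMod n),
      F x i = x i + ∑ j ∈ Finset.Icc 1 (r - 1),
        (x (i - (r : ZMod n) + (j : ZMod n)) + 1) * (x (i + (j : ZMod n) + 1) + 1) *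
          (∏ m ∈ Finset.Icc 1 j, x (i + (m : ZMod n))) *
          ((∏ m ∈ Finset.Icc (j + 1) r, (x (i - (r : ZMod n) + (m : ZMod n)) + 1)) +
            ∏ m ∈ Finset.Icc (j + 1) r, x (i - (r : ZMod n) + (m : ZMod n)))) :
    ∀ x : ZMod n → ZMod 2, F^[r] x = x :=
  stmt14_general r n F hF
end

section
/- The Patt function f : F_2^4 → F_2 given by f(x) = x_2 ⊕ x_1 (x_3 ⊕ 1) x_4 is a proper lifting; moreover, for every n ≥ 4, the map F : F_2^n → F_2^n defined by F(x)_i = f(x_{i−1}, x_i, x_{i+1}, x_{i+2}) (indices modulo n) satisfies F(F(x)) = x for all x ∈ F_2^n. -/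
/-!
Anchored at `x_{i-1}`, the Patt lifting is `G(x)_i = x_i + x_{i-1} (x_{i+1} + 1) x_{i+2}`:
it flips `x_i` exactly when the window `(x_{i-1}, x_{i+1}, x_{i+2})` reads `(1, 0, 1)`.
Flipping never changes whether a window reads `(1, 0, 1)`, so `G ∘ G` flips each bit
twice or not at all; this is a local identity in `x_{i-2}, …, x_{i+4}`, checked by
exhaustion. The unanchored lifting is `G` followed by a cyclic shift, hence bijective.
-/

theorem patt_local_identity (a b c d e g h : ZMod 2) :
    (c + b * (d + 1) * e) +
      (b + a * (c + 1) * d) * ((d + c * (e + 1) * g) + 1) * (e + d * (g + 1) * h)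
      = c := by
  revert a b c d e g h; decide

theorem inducedShift_patt_apply {n : ℕ} {f : (Fin 4 → ZMod 2) → ZMod 2}
    (hf : ∀ x, f x = x 1 + x 0 * (x 2 + 1) * x 3) (x : ZMod n → ZMod 2) (i : ZMod n) :
    inducedShift 4 n 1 f x i = x i + x (i - 1) * (x (i + 1) + 1) * x (i + 2) := by
  simp only [inducedShift, hf]
  norm_num [sub_add_cancel, sub_add_eq_add_sub]
  ring_nf

theorem inducedShift_patt_involutive {n : ℕ} {f : (Fin 4 → ZMod 2) → ZMod 2}
    (hf : ∀ x, f x = x 1 + x 0 * (x 2 + 1) * x 3) :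
    Function.Involutive (inducedShift 4 n 1 f) := by
  intro x
  funext i
  simp only [inducedShift_patt_apply hf]
  convert patt_local_identity (x (i - 2)) (x (i - 1)) (x i) (x (i + 1)) (x (i + 2)) (x (i + 3))
    (x (i + 4)) using 4 <;> ring_nf

theorem induced_eq_comp_inducedShift (k n j0 : ℕ) (f : (Fin k → ZMod 2) → ZMod 2) :
    induced k n f = (fun y i => y (i + j0)) ∘ inducedShift k n j0 f := by
  funext x i
  simp [induced, inducedShift]

theorem bijective_precomp_addRight {G β : Type*} [AddGroup G] (c : G) :
    Function.Bijective (fun (y : G → β) i => y (i + c)) :=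
  ((Equiv.addRight c).symm.arrowCongr (Equiv.refl β)).bijective

/-- the Patt function `f(x) = x_2 ⊕ x_1(x_3 ⊕ 1)x_4` is a proper
lifting; moreover for every `n ≥ 4` the map
`F(x)_i = f(x_{i-1}, x_i, x_{i+1}, x_{i+2})` (indices mod `n`) is an involution. -/
theorem stmt15 (f : (Fin 4 → ZMod 2) → ZMod 2)
    (hf : ∀ x, f x = x 1 + x 0 * (x 2 + 1) * x 3) :
    (∀ n, 4 ≤ n → Function.Bijective (induced 4 n f)) ∧
      (∀ n, 4 ≤ n → ∀ x : ZMod n → ZMod 2,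
        inducedShift 4 n 1 f (inducedShift 4 n 1 f x) = x) := by
  refine ⟨fun n _ => ?_, fun n _ => inducedShift_patt_involutive hf⟩
  rw [induced_eq_comp_inducedShift 4 n 1 f]
  exact (bijective_precomp_addRight _).comp (inducedShift_patt_involutive hf).bijective
end

section
/- Let f : F_2^4 → F_2 be given by f(x) = x_2 ⊕ x_1 (x_3 ⊕ 1) x_4 and g : F_2^5 → F_2 by g(x) = x_2 ⊕ x_1 (x_3 ⊕ 1)(x_4 ⊕ 1) x_5. Then for all (x_1, …, x_8) ∈ F_2^8: g(f(x_1, x_2, x_3, x_4), f(x_2, x_3, x_4, x_5), f(x_3, x_4, x_5, x_6), f(x_4, x_5, x_6, x_7), f(x_5, x_6, x_7, x_8)) = x_3 ⊕ x_2 (x_5 (x_4 ⊕ 1) ⊕ (x_5 ⊕ 1) x_6 (x_3 ⊕ x_4 ⊕ 1)); in particular this composition is independent of x_1, x_7 and x_8, and (after the shift x_i ← x_{i+1}) the composed local rule g ∘ f equals x_2 ⊕ x_1 (x_4 (x_3 ⊕ 1) ⊕ (x_4 ⊕ 1) x_5 (x_2 ⊕ x_3 ⊕ 1)), a Boolean function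 of diameter 5. -/
theorem BoolDependsOn.of_update_ne {k : ℕ} {g : (Fin k → ZMod 2) → ZMod 2} {i : Fin k}
    (x : Fin k → ZMod 2) (a b : ZMod 2)
    (hne : g (Function.update x i a) ≠ g (Function.update x i b)) : BoolDependsOn g i :=
  ⟨_, _, fun j hj => by simp only [Function.update_of_ne hj], hne⟩

theorem zmod2_rule_composition (x₀ x₁ x₂ x₃ x₄ x₅ x₆ x₇ : ZMod 2) :
    (x₂ + x₁ * (x₃ + 1) * x₄) + (x₁ + x₀ * (x₂ + 1) * x₃) * ((x₃ + x₂ * (x₄ + 1) * x₅) + 1) *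
        ((x₄ + x₃ * (x₅ + 1) * x₆) + 1) * (x₅ + x₄ * (x₆ + 1) * x₇) =
      x₂ + x₁ * (x₄ * (x₃ + 1) + (x₄ + 1) * x₅ * (x₂ + x₃ + 1)) := by
  revert x₀ x₁ x₂ x₃ x₄ x₅ x₆ x₇
  decide

/-- with `f(x) = x_2 ⊕ x_1(x_3 ⊕ 1)x_4` and
`g(x) = x_2 ⊕ x_1(x_3 ⊕ 1)(x_4 ⊕ 1)x_5`, the composition
`g(f(x_1,…,x_4), …, f(x_5,…,x_8))` equals
`x_3 ⊕ x_2(x_5(x_4 ⊕ 1) ⊕ (x_5 ⊕ 1)x_6(x_3 ⊕ x_4 ⊕ 1))`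
(in particular it is independent of `x_1, x_7, x_8`), it equals `h(x_2,…,x_6)` where
`h = g ∘ f` is the shifted local rule
`h(x) = x_2 ⊕ x_1(x_4(x_3 ⊕ 1) ⊕ (x_4 ⊕ 1)x_5(x_2 ⊕ x_3 ⊕ 1))`, and `h` has
diameter 5 (it depends on both its first and its fifth variable). -/
theorem stmt16 (f : (Fin 4 → ZMod 2) → ZMod 2) (g : (Fin 5 → ZMod 2) → ZMod 2)
    (h : (Fin 5 → ZMod 2) → ZMod 2)
    (hf : ∀ x, f x = x 1 + x 0 * (x 2 + 1) * x 3)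
    (hg : ∀ x, g x = x 1 + x 0 * (x 2 + 1) * (x 3 + 1) * x 4)
    (hh : ∀ x, h x = x 1 + x 0 * (x 3 * (x 2 + 1) + (x 3 + 1) * x 4 * (x 1 + x 2 + 1))) :
    (∀ x : Fin 8 → ZMod 2,
      g ![f ![x 0, x 1, x 2, x 3], f ![x 1, x 2, x 3, x 4], f ![x 2, x 3, x 4, x 5],
          f ![x 3, x 4, x 5, x 6], f ![x 4, x 5, x 6, x 7]] =
        x 2 + x 1 * (x 4 * (x 3 + 1) + (x 4 + 1) * x 5 * (x 2 + x 3 + 1))) ∧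
    (∀ x : Fin 8 → ZMod 2,
      g ![f ![x 0, x 1, x 2, x 3], f ![x 1, x 2, x 3, x 4], f ![x 2, x 3, x 4, x 5],
          f ![x 3, x 4, x 5, x 6], f ![x 4, x 5, x 6, x 7]] =
        h ![x 1, x 2, x 3, x 4, x 5]) ∧
    BoolDependsOn h 0 ∧ BoolDependsOn h 4 := by
  have hcomp : ∀ x : Fin 8 → ZMod 2,
      g ![f ![x 0, x 1, x 2, x 3], f ![x 1, x 2, x 3, x 4], f ![x 2, x 3, x 4, x 5],
          f ![x 3, x 4, x 5, x 6], f ![x 4, x 5, x 6, x 7]] =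
        x 2 + x 1 * (x 4 * (x 3 + 1) + (x 4 + 1) * x 5 * (x 2 + x 3 + 1)) := fun x => by
    simpa [hf, hg] using zmod2_rule_composition (x 0) (x 1) (x 2) (x 3) (x 4) (x 5) (x 6) (x 7)
  refine ⟨hcomp, fun x => by simp [hcomp, hh], ?_, ?_⟩
  · exact .of_update_ne ![0, 0, 0, 1, 0] 0 1 (by simp only [hh]; decide)
  · exact .of_update_ne ![1, 0, 0, 0, 0] 0 1 (by simp only [hh]; decide)
end

section
/- Let h : F_2^5 → F_2 be given by h(x) = x_2 ⊕ x_1 (x_4 (x_3 ⊕ 1) ⊕ (x_4 ⊕ 1) x_5 (x_2 ⊕ x_3 ⊕ 1)) (the composition (1★001) ∘ (1★01)). Then for every j ∈ {1, 2, 3, 4, 5}, the function h(x) ⊕ x_j depends on x_j; that is, there exist x, x' ∈ F_2^5 differing only in coordinate j such that h(x) ⊕ x_j ≠ h(x') ⊕ x'_j. -/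
/-! Flipping a single coordinate suffices. For `j ≠ 2` flip `x_j` at `x = 0`: `h` vanishes both
at `0` and at each unit vector `e_j` with `j ≠ 2`, so `h(x) ⊕ x_j` changes from `0` to `1`.
For `j = 2` flip `x_2` at `x = e_1 + e_5`, where `h(x) ⊕ x_2 = x_1 x_5 (x_2 ⊕ x_3 ⊕ 1) = x_2 ⊕ 1`.
In Lean the coordinates are indexed from `0`, so `x_2` is `x 1`. -/

open Function

theorem exists_ne_of_ne_update {ι α β : Type*} [DecidableEq ι] (g : (ι → α) → β) (x : ι → α)
    (j : ι) (a : α) (hne : g x ≠ g (update x j a)) :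
    ∃ x x' : ι → α, (∀ m, m ≠ j → x m = x' m) ∧ g x ≠ g x' :=
  ⟨x, update x j a, fun _ hm => (update_of_ne hm a x).symm, hne⟩

/-- for
`h(x) = x_2 ⊕ x_1(x_4(x_3 ⊕ 1) ⊕ (x_4 ⊕ 1)x_5(x_2 ⊕ x_3 ⊕ 1))`
(the composition `(1★001) ∘ (1★01)`), for every coordinate `j` the function
`h(x) ⊕ x_j` depends on `x_j`: there are inputs differing only in coordinate `j`
on which `h(x) ⊕ x_j` takes different values. -/
theorem stmt18 (h : (Fin 5 → ZMod 2) → ZMod 2)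
    (hh : ∀ x, h x = x 1 + x 0 * (x 3 * (x 2 + 1) + (x 3 + 1) * x 4 * (x 1 + x 2 + 1))) :
    ∀ j : Fin 5, ∃ x x' : Fin 5 → ZMod 2,
      (∀ m, m ≠ j → x m = x' m) ∧ h x + x j ≠ h x' + x' j := by
  intro j
  refine exists_ne_of_ne_update (fun x => h x + x j)
    (if j = 1 then ![1, 0, 0, 0, 1] else 0) j 1 ?_
  simp only [hh]
  fin_cases j <;> decide
end
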